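/- arXiv:0803.0661 — 6 statements merged into one kernel-verified Lean document; each statement's English description precedes it below -/
import Mathlib

section
/- There is an absolute constant c such that for any DAG G with a unique sink and all vertices of indegree 0 or 2, and any d ≥ 1, there is a resolution refutation of the pebbling contradiction Peb_G^d of length at most c·d²·|V(G)| and width at most c·d. -/
/-- A clause: a finite set of literals, where a literal is a variable paired
with its polarity. -/
abbrev RClause (V : Type) := Finset (V × Bool)

/-- A clause configuration: a finite set of clauses. -/
abbrev RConfig (V : Type) := Finset (RClause V)

/-- A truth value assignment satisfies a clause if it satisfies some literal in it. -/
def RClause.sat {V : Type} (α : V → Bool) (C : RClause V) : Prop :=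
  ∃ l ∈ C, α l.1 = l.2

/-- A set of clauses logically implies a clause. -/
def CnfImplies {V : Type} (F : Set (RClause V)) (D : RClause V) : Prop :=
  ∀ α : V → Bool, (∀ C ∈ F, RClause.sat α C) → RClause.sat α D

/-- One step of resolution from a CNF formula `F`: axiom download, erasure,
or inference of a resolvent. -/
inductive ResStep {V : Type} [DecidableEq V] (F : Set (RClause V)) :
    RConfig V → RConfig V → Prop
  | download {C : RConfig V} {D : RClause V} (hD : D ∈ F) : ResStep F C (insert D C)
  | delete {C : RConfig V} {D : RClause V} (hD : D ∈ C) : ResStep F C (C.erase D)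
  | infer {C : RConfig V} {C₁ C₂ : RClause V} {x : V}
      (h₁ : C₁ ∈ C) (h₂ : C₂ ∈ C) (hx₁ : (x, true) ∈ C₁) (hx₂ : (x, false) ∈ C₂) :
      ResStep F C (insert (C₁.erase (x, true) ∪ C₂.erase (x, false)) C)

/-- A resolution derivation of the clause `A` from the CNF formula `F`. -/
structure ResDerivation {V : Type} [DecidableEq V] (F : Set (RClause V)) (A : RClause V) where
  len : ℕ
  cfg : ℕ → RConfig V
  init : cfg 0 = ∅
  final : cfg len = {A}
  steps : ∀ t < len, ResStep F (cfg t) (cfg (t + 1))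

/-- A resolution refutation of `F` is a derivation of the empty clause from `F`. -/
abbrev ResRefutation {V : Type} [DecidableEq V] (F : Set (RClause V)) :=
  ResDerivation F (∅ : RClause V)

namespace ResDerivation

variable {V : Type} [DecidableEq V] {F : Set (RClause V)} {A : RClause V}

/-- The clause space of a derivation: the maximal number of clauses in memory. -/
def space (π : ResDerivation F A) : ℕ :=
  (Finset.range (π.len + 1)).sup fun t => (π.cfg t).card

/-- The set of distinct clauses appearing in a derivation. -/
def clauses (π : ResDerivation F A) : Finset (RClause V) :=
  (Finset.range (π.len + 1)).sup π.cfg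

/-- The length of a derivation: the number of distinct clauses appearing in it. -/
def length (π : ResDerivation F A) : ℕ := π.clauses.card

/-- The width of a derivation: the size of a largest clause appearing in it. -/
def width (π : ResDerivation F A) : ℕ :=
  (Finset.range (π.len + 1)).sup fun t => (π.cfg t).sup Finset.card

/-- The variable space of a derivation: the maximal total number of literals in memory. -/
def varSpace (π : ResDerivation F A) : ℕ :=
  (Finset.range (π.len + 1)).sup fun t => ∑ C ∈ π.cfg t, C.card

end ResDerivation

/-- Minimum clause space of any resolution refutation of `F`. -/
noncomputable def spMin {V : Type} [DecidableEq V] (F : Set (RClause V)) : ℕ :=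
  sInf { s | ∃ π : ResRefutation F, π.space = s }

/-- Minimum variable space of any resolution refutation of `F`. -/
noncomputable def varSpMin {V : Type} [DecidableEq V] (F : Set (RClause V)) : ℕ :=
  sInf { s | ∃ π : ResRefutation F, π.varSpace = s }

/-- Minimum width of any resolution refutation of `F`. -/
noncomputable def widthMin {V : Type} [DecidableEq V] (F : Set (RClause V)) : ℕ :=
  sInf { w | ∃ π : ResRefutation F, π.width = w }

/-- The size of a CNF formula: total number of literals counted with repetition. -/
def cnfSize {V : Type} (F : Finset (RClause V)) : ℕ := ∑ C ∈ F, C.card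

/-- The set of variables occurring in a clause. -/
def clauseVars {V : Type} [DecidableEq V] (C : RClause V) : Finset V := C.image Prod.fst
/-- The clause `x(v)₁ ∨ ... ∨ x(v)_d`. -/
def posCl {V : Type} [DecidableEq V] (d : ℕ) (v : V) : RClause (V × Fin d) :=
  (Finset.univ : Finset (Fin d)).image fun j => ((v, j), true)
/-- A DAG with a unique sink in which every vertex has indegree `0` (the
sources) or `2`. `pred v` is the finite set of immediate predecessors of `v`;
acyclicity is expressed by well-foundedness of the edge relation. -/
structure PebDag (V : Type) where
  pred : V → Finset V
  wf : WellFounded fun u v => u ∈ pred v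
  indeg : ∀ v, (pred v).card = 0 ∨ (pred v).card = 2
  sink : V
  sink_unique : ∀ v, (∀ w, v ∉ pred w) ↔ v = sink

/-- The `d`-th degree pebbling contradiction `Peb_G^d`: source axioms,
pebbling axioms, and target axioms. -/
def pebCnf {V : Type} [DecidableEq V] (G : PebDag V) (d : ℕ) :
    Set (RClause (V × Fin d)) :=
  { C |
    (∃ s : V, G.pred s = ∅ ∧ C = posCl d s) ∨
    (∃ w u v : V, G.pred w = {u, v} ∧ u ≠ v ∧ ∃ i j : Fin d,
      C = insert ((u, i), false) (insert ((v, j), false) (posCl d w))) ∨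
    (∃ i : Fin d, C = {((G.sink, i), false)}) }

/-- The formula `*Peb_G^d`: the pebbling contradiction with the target axioms
removed. -/
def pebStarCnf {V : Type} [DecidableEq V] (G : PebDag V) (d : ℕ) :
    Set (RClause (V × Fin d)) :=
  { C |
    (∃ s : V, G.pred s = ∅ ∧ C = posCl d s) ∨
    (∃ w u v : V, G.pred w = {u, v} ∧ u ≠ v ∧ ∃ i j : Fin d,
      C = insert ((u, i), false) (insert ((v, j), false) (posCl d w))) }

/-!
For every vertex, in topological order, derive `posCl d v = x(v)_1 ∨ … ∨ x(v)_d`. At a vertex `w`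
with predecessors `u`, `v`, resolving `posCl d u` successively against the pebbling axioms
`¬x(u)_i ∨ ¬x(v)_j ∨ posCl d w`, `i = 1, …, d`, yields `¬x(v)_j ∨ posCl d w` for each `j`, and
resolving `posCl d v` successively against these yields `posCl d w`: at most `3d²` clauses, each of
width at most `2d + 1`. At the sink `z` the target axioms `¬x(z)_i` refute `posCl d z` in the same
way. The refutation only adds clauses and at the end erases all but the empty clause, so its length
is the number of clauses derived.
-/

open Finset

section Grows

variable {V : Type} [DecidableEq V] {F : Set (RClause V)}

/-- Reachability by downloads and inferences only: `S ⊆ S'` rules out erasures. -/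
def Grows (F : Set (RClause V)) : RConfig V → RConfig V → Prop :=
  Relation.ReflTransGen fun S S' => ResStep F S S' ∧ S ⊆ S'

theorem Grows.refl (S : RConfig V) : Grows F S S :=
  Relation.ReflTransGen.refl

theorem Grows.subset {S T : RConfig V} (h : Grows F S T) : S ⊆ T := by
  induction h with
  | refl => exact Subset.rfl
  | tail _ hstep ih => exact ih.trans hstep.2

theorem grows_insert_of_mem (S : RConfig V) {D : RClause V} (hD : D ∈ F) :
    Grows F S (insert D S) :=
  .single ⟨.download hD, subset_insert _ _⟩

theorem grows_insert_resolvent {S : RConfig V} {C₁ C₂ : RClause V} {x : V}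
    (h₁ : C₁ ∈ S) (h₂ : C₂ ∈ S) (hx₁ : (x, true) ∈ C₁) (hx₂ : (x, false) ∈ C₂) :
    Grows F S (insert (C₁.erase (x, true) ∪ C₂.erase (x, false)) S) :=
  .single ⟨.infer h₁ h₂ hx₁ hx₂, subset_insert _ _⟩

theorem ResStep.union_left {S S' : RConfig V} (R : RConfig V) (h : ResStep F S S')
    (hSS' : S ⊆ S') : ResStep F (R ∪ S) (R ∪ S') := by
  cases h with
  | download hD => rw [union_insert]; exact .download hD
  | delete hD => exact absurd (hSS' hD) (notMem_erase _ _)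
  | infer h₁ h₂ hx₁ hx₂ =>
    rw [union_insert]; exact .infer (mem_union_right _ h₁) (mem_union_right _ h₂) hx₁ hx₂

theorem Grows.union_left {S T : RConfig V} (R : RConfig V) (h : Grows F S T) :
    Grows F (R ∪ S) (R ∪ T) := by
  induction h with
  | refl => exact Grows.refl _
  | tail _ hstep ih =>
    exact ih.tail ⟨hstep.1.union_left R hstep.2, union_subset_union_right hstep.2⟩

theorem Grows.trans {S T U : RConfig V} (h₁ : Grows F S T) (h₂ : Grows F T U) : Grows F S U :=
  Relation.ReflTransGen.trans h₁ h₂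

theorem Grows.union {S A B : RConfig V} (hA : Grows F S A) (hB : Grows F S B) :
    Grows F S (A ∪ B) :=
  hA.trans (by simpa [union_eq_left.2 hA.subset] using hB.union_left A)

theorem Grows.union_biUnion {ι : Type} [DecidableEq ι] {S : RConfig V} {J : Finset ι}
    {X : ι → RConfig V} (h : ∀ j ∈ J, Grows F S (S ∪ X j)) : Grows F S (S ∪ J.biUnion X) := by
  induction J using Finset.induction_on with
  | empty => simpa using Grows.refl (F := F) S
  | insert j J _ ih =>
    have := (h j (mem_insert_self j J)).union (ih fun i hi => h i (mem_insert_of_mem hi))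
    rwa [biUnion_insert, union_union_distrib_left]

theorem grows_union_of_subset {S A : RConfig V} (hA : ∀ D ∈ A, D ∈ F) : Grows F S (S ∪ A) := by
  simpa using Grows.union_biUnion (J := A) (X := fun D => {D}) fun D hD => by
    simpa [← insert_eq, union_comm] using grows_insert_of_mem S (hA D hD)

end Grows

section Derivations

variable {V : Type} [DecidableEq V] {F : Set (RClause V)}

def ResStepWithin (F : Set (RClause V)) (T S S' : RConfig V) : Prop :=
  ResStep F S S' ∧ S' ⊆ T

theorem ResDerivation.exists_clauses_subset_of_reflTransGen {T : RConfig V} {A : RClause V}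
    (h : Relation.ReflTransGen (ResStepWithin F T) ∅ {A}) :
    ∃ π : ResDerivation F A, π.clauses ⊆ T := by
  suffices ∀ B, Relation.ReflTransGen (ResStepWithin F T) ∅ B →
      ∃ (n : ℕ) (cfg : ℕ → RConfig V), cfg 0 = ∅ ∧ cfg n = B ∧
        (∀ t < n, ResStep F (cfg t) (cfg (t + 1))) ∧ ∀ t ≤ n, cfg t ⊆ T by
    obtain ⟨n, cfg, h0, hn, hsteps, hT⟩ := this _ h
    exact ⟨⟨n, cfg, h0, hn, hsteps⟩,
      Finset.sup_le fun t ht => hT t (Nat.lt_succ_iff.1 (mem_range.1 ht))⟩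
  intro B hB
  induction hB with
  | refl => exact ⟨0, fun _ => ∅, rfl, rfl, by simp, fun _ _ => empty_subset _⟩
  | @tail B C _ hBC ih =>
    obtain ⟨n, cfg, h0, hn, hsteps, hT⟩ := ih
    refine ⟨n + 1, fun t => if t ≤ n then cfg t else C, by simpa using h0, by simp, ?_, ?_⟩
    · intro t ht
      rcases Nat.lt_or_eq_of_le (Nat.lt_succ_iff.1 ht) with ht | rfl
      · simpa [ht.le, Nat.succ_le_of_lt ht] using hsteps t ht
      · simpa [hn] using hBC.1
    · intro t ht
      dsimp only
      split_ifs with htn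
      · exact hT t htn
      · exact hBC.2

theorem ResDerivation.width_le_of_forall_card_le {A : RClause V} (π : ResDerivation F A)
    {w : ℕ} (h : ∀ C ∈ π.clauses, C.card ≤ w) : π.width ≤ w :=
  Finset.sup_le fun t ht => Finset.sup_le fun C hC => h C (mem_sup.2 ⟨t, ht, hC⟩)

theorem reflTransGen_resStepWithin_singleton {S T : RConfig V} {A : RClause V} (hA : A ∈ S)
    (hST : S ⊆ T) : Relation.ReflTransGen (ResStepWithin F T) S {A} := by
  rw [← insert_eq_of_mem hA] at hST ⊢
  clear hA
  induction S using Finset.induction_on with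
  | empty => exact .refl
  | insert D S hD ih =>
    by_cases hDA : D = A
    · subst hDA
      rw [insert_idem] at hST ⊢
      exact ih hST
    · have herase : (insert A (insert D S)).erase D = insert A S := by
        rw [erase_insert_of_ne (Ne.symm hDA), erase_insert hD]
      have hsub : insert A S ⊆ T := (insert_subset_insert _ (subset_insert _ _)).trans hST
      refine .head ⟨?_, hsub⟩ (ih hsub)
      rw [← herase]
      exact .delete (mem_insert_of_mem (mem_insert_self _ _))

theorem Grows.reflTransGen_resStepWithin {S T U : RConfig V} (h : Grows F S U) (hUT : U ⊆ T) :
    Relation.ReflTransGen (ResStepWithin F T) S U := by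
  induction h with
  | refl => exact .refl
  | tail _ hstep ih => exact (ih (hstep.2.trans hUT)).tail ⟨hstep.1, hUT⟩

theorem Grows.exists_resRefutation_clauses_subset {T : RConfig V} (h : Grows F ∅ T)
    (hT : ∅ ∈ T) : ∃ π : ResRefutation F, π.clauses ⊆ T :=
  ResDerivation.exists_clauses_subset_of_reflTransGen
    ((h.reflTransGen_resStepWithin Subset.rfl).trans
      (reflTransGen_resStepWithin_singleton hT Subset.rfl))

end Derivations

section Elimination

variable {V : Type} [DecidableEq V] {d : ℕ}

/-- The clause `x(v)_k ∨ … ∨ x(v)_{d-1}`, with variables indexed from `0`. -/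
def posClTail (d : ℕ) (v : V) (k : ℕ) : RClause (V × Fin d) :=
  (posCl d v).filter fun l => k ≤ l.1.2

theorem posClTail_zero (v : V) : posClTail d v 0 = posCl d v := by
  simp [posClTail]

theorem posClTail_of_le {k : ℕ} (h : d ≤ k) (v : V) : posClTail d v k = ∅ := by
  ext l
  simp only [posClTail, posCl, mem_filter, mem_image, mem_univ, true_and, notMem_empty,
    iff_false, not_and, forall_exists_index]
  rintro j rfl
  simp only
  omega

theorem card_posClTail_le (v : V) (k : ℕ) : (posClTail d v k).card ≤ d :=
  (card_filter_le _ _).trans (card_image_le.trans (by simp))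

theorem erase_posClTail (u : V) {k : ℕ} (hk : k < d) :
    (posClTail d u k).erase ((u, ⟨k, hk⟩), true) = posClTail d u (k + 1) := by
  ext ⟨⟨v, j⟩, b⟩
  simp only [posClTail, posCl, mem_erase, mem_filter, mem_image, mem_univ, true_and, ne_eq,
    Prod.mk.injEq, Fin.ext_iff]
  grind

theorem resolvent_posClTail {u : V} {k : ℕ} (hk : k < d) {P Q : RClause (V × Fin d)}
    (hPQ : P ⊆ Q) (hQ : ∀ i b, ((u, i), b) ∉ Q) :
    (posClTail d u k ∪ P).erase ((u, ⟨k, hk⟩), true) ∪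
        (insert ((u, ⟨k, hk⟩), false) Q).erase ((u, ⟨k, hk⟩), false) =
      posClTail d u (k + 1) ∪ Q := by
  rw [erase_union_distrib, erase_posClTail, erase_eq_of_notMem fun h => hQ _ _ (hPQ h),
    erase_insert (hQ _ _), union_assoc, union_eq_right.2 hPQ]

/-- The clauses `x(u)_{k+1} ∨ … ∨ x(u)_{d-1} ∨ Q` obtained by resolving `posCl d u` successively
against `¬x(u)_k ∨ Q` for `k = 0, …, d-1`; the last of them is `Q`. -/
def elimClauses (d : ℕ) (u : V) (Q : RClause (V × Fin d)) : RConfig (V × Fin d) :=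
  (range d).image fun k => posClTail d u (k + 1) ∪ Q

theorem mem_elimClauses (hd : 0 < d) (u : V) (Q : RClause (V × Fin d)) :
    Q ∈ elimClauses d u Q :=
  mem_image.2 ⟨d - 1, by simp [hd], by rw [posClTail_of_le (by omega), empty_union]⟩

theorem card_elimClauses_le (u : V) (Q : RClause (V × Fin d)) : (elimClauses d u Q).card ≤ d :=
  card_image_le.trans (card_range d).le

theorem card_le_of_mem_elimClauses {u : V} {Q C : RClause (V × Fin d)}
    (hC : C ∈ elimClauses d u Q) : C.card ≤ d + Q.card := by
  obtain ⟨k, -, rfl⟩ := mem_image.1 hC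
  exact (card_union_le _ _).trans (Nat.add_le_add_right (card_posClTail_le u _) _)

theorem grows_union_elimClauses {F : Set (RClause (V × Fin d))} {S : RConfig (V × Fin d)}
    {u : V} {Q : RClause (V × Fin d)} (hQ : ∀ i b, ((u, i), b) ∉ Q) (hu : posCl d u ∈ S)
    (hS : ∀ i, insert ((u, i), false) Q ∈ S) : Grows F S (S ∪ elimClauses d u Q) := by
  suffices ∀ n ≤ d, Grows F S (S ∪ (range n).image fun k => posClTail d u (k + 1) ∪ Q) from
    this d le_rfl
  intro n hn
  induction n with
  | zero => simpa using Grows.refl (F := F) S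
  | succ n ih =>
    have hnd : n < d := hn
    -- the previous clause of the chain, `posCl d u` when `n = 0`
    obtain ⟨P, hPQ, hP⟩ : ∃ P ⊆ Q,
        posClTail d u n ∪ P ∈ S ∪ (range n).image fun k => posClTail d u (k + 1) ∪ Q := by
      cases n with
      | zero => exact ⟨∅, empty_subset _, by simp [posClTail_zero, hu]⟩
      | succ m => exact ⟨Q, Subset.rfl, mem_union_right _ (mem_image_of_mem _ (by simp))⟩
    have hstep := grows_insert_resolvent (F := F) hP (mem_union_left _ (hS ⟨n, hnd⟩))
      (mem_union_left _ (mem_filter.2 ⟨mem_image_of_mem _ (mem_univ _), le_rfl⟩))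
      (mem_insert_self _ _)
    rw [resolvent_posClTail hnd hPQ hQ] at hstep
    rw [range_add_one, image_insert, union_insert]
    exact (ih (by omega)).trans hstep

end Elimination

theorem PebDag.ne_of_mem_pred {V : Type} (G : PebDag V) {u w : V} (h : u ∈ G.pred w) :
    u ≠ w := by
  rintro rfl
  exact G.wf.irrefl.irrefl u h

section Pebbling

variable {V : Type} [DecidableEq V] {d : ℕ}

theorem notMem_posCl_of_ne {a w : V} (h : a ≠ w) (i : Fin d) (b : Bool) :
    ((a, i), b) ∉ posCl d w := by
  simp [posCl, Ne.symm h]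

theorem card_posCl_le (w : V) : (posCl d w).card ≤ d :=
  card_image_le.trans (by simp)

def pebStepClauses (d : ℕ) (u v w : V) : RConfig (V × Fin d) :=
  ((univ ×ˢ univ).image fun ij : Fin d × Fin d =>
      insert ((u, ij.1), false) (insert ((v, ij.2), false) (posCl d w))) ∪
    univ.biUnion (fun j => elimClauses d u (insert ((v, j), false) (posCl d w))) ∪
    elimClauses d v (posCl d w)

theorem posCl_mem_pebStepClauses (hd : 0 < d) (u v w : V) :
    posCl d w ∈ pebStepClauses d u v w :=
  mem_union_right _ (mem_elimClauses hd v _)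

theorem card_pebStepClauses_le (u v w : V) : (pebStepClauses d u v w).card ≤ 3 * d ^ 2 := by
  have axioms : ((univ ×ˢ univ).image fun ij : Fin d × Fin d =>
      insert ((u, ij.1), false) (insert ((v, ij.2), false) (posCl d w))).card ≤ d * d :=
    card_image_le.trans (by simp)
  have elimU : (univ.biUnion fun j => elimClauses d u (insert ((v, j), false) (posCl d w))).card
      ≤ d * d :=
    card_biUnion_le.trans ((sum_le_sum fun j _ => card_elimClauses_le u _).trans (by simp))
  calc (pebStepClauses d u v w).card ≤ d * d + d * d + d :=
        (card_union_le _ _).trans (add_le_add ((card_union_le _ _).trans (add_le_add axioms elimU))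
          (card_elimClauses_le v _))
    _ ≤ 3 * d ^ 2 := by nlinarith

theorem card_le_of_mem_pebStepClauses (hd : 0 < d) {u v w : V} {C : RClause (V × Fin d)}
    (hC : C ∈ pebStepClauses d u v w) : C.card ≤ 3 * d := by
  have hQ : ∀ j, (insert ((v, j), false) (posCl d w)).card ≤ d + 1 := fun j =>
    (card_insert_le _ _).trans (Nat.add_le_add_right (card_posCl_le w) 1)
  simp only [pebStepClauses, mem_union, mem_image, mem_biUnion, mem_univ, true_and] at hC
  rcases hC with (⟨⟨i, j⟩, -, rfl⟩ | ⟨j, hC⟩) | hC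
  · dsimp only
    have := (card_insert_le ((u, i), false) _).trans (Nat.add_le_add_right (hQ j) 1)
    omega
  · have := (card_le_of_mem_elimClauses hC).trans (Nat.add_le_add_left (hQ j) d)
    omega
  · have := (card_le_of_mem_elimClauses hC).trans (Nat.add_le_add_left (card_posCl_le w) d)
    omega

theorem grows_union_pebStepClauses (hd : 0 < d) {G : PebDag V} {u v w : V}
    (hw : G.pred w = {u, v}) (huv : u ≠ v) (huw : u ≠ w) (hvw : v ≠ w)
    {S : RConfig (V × Fin d)} (hu : posCl d u ∈ S) (hv : posCl d v ∈ S) :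
    Grows (pebCnf G d) S (S ∪ pebStepClauses d u v w) := by
  set Q : Fin d → RClause (V × Fin d) := fun j => insert ((v, j), false) (posCl d w)
  set A := (univ ×ˢ univ).image fun ij : Fin d × Fin d => insert ((u, ij.1), false) (Q ij.2)
  set B := univ.biUnion fun j => elimClauses d u (Q j)
  have downloadA : Grows (pebCnf G d) S (S ∪ A) := by
    refine grows_union_of_subset fun C hC => ?_
    obtain ⟨⟨i, j⟩, -, rfl⟩ := mem_image.1 hC
    exact Or.inr (Or.inl ⟨w, u, v, hw, huv, i, j, rfl⟩)
  have elimU : Grows (pebCnf G d) (S ∪ A) (S ∪ A ∪ B) := by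
    refine Grows.union_biUnion fun j _ => grows_union_elimClauses ?_ (mem_union_left _ hu)
      fun i => mem_union_right _ (mem_image_of_mem _ (mk_mem_product (mem_univ i) (mem_univ j)))
    intro i b
    simpa [Q, huv] using notMem_posCl_of_ne huw i b
  have elimV : Grows (pebCnf G d) (S ∪ A ∪ B) (S ∪ A ∪ B ∪ elimClauses d v (posCl d w)) :=
    grows_union_elimClauses (notMem_posCl_of_ne hvw) (mem_union_left _ (mem_union_left _ hv))
      fun j => mem_union_right _ (mem_biUnion.2 ⟨j, mem_univ _, mem_elimClauses hd u _⟩)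
  simpa only [pebStepClauses, union_assoc] using downloadA.trans (elimU.trans elimV)

end Pebbling

section Refutation

variable {V : Type} [DecidableEq V] {d : ℕ}

open Classical in
/-- The predecessors are taken in an arbitrary fixed order. -/
noncomputable def vertexClauses (G : PebDag V) (d : ℕ) (w : V) : RConfig (V × Fin d) :=
  if h : ∃ p : V × V, G.pred w = {p.1, p.2} ∧ p.1 ≠ p.2 then
    pebStepClauses d h.choose.1 h.choose.2 w
  else {posCl d w}

theorem card_vertexClauses_le (hd : 0 < d) (G : PebDag V) (w : V) :
    (vertexClauses G d w).card ≤ 3 * d ^ 2 := by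
  unfold vertexClauses
  split_ifs
  · exact card_pebStepClauses_le _ _ _
  · simp only [card_singleton]; nlinarith

theorem card_le_of_mem_vertexClauses (hd : 0 < d) {G : PebDag V} {w : V}
    {C : RClause (V × Fin d)} (hC : C ∈ vertexClauses G d w) : C.card ≤ 3 * d := by
  unfold vertexClauses at hC
  split_ifs at hC
  · exact card_le_of_mem_pebStepClauses hd hC
  · rw [mem_singleton.1 hC]
    exact (card_posCl_le w).trans (by omega)

variable [Fintype V]

theorem exists_grows_posCl (hd : 0 < d) (G : PebDag V) (w : V) :
    ∃ S, Grows (pebCnf G d) ∅ S ∧ S ⊆ univ.biUnion (vertexClauses G d) ∧ posCl d w ∈ S := by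
  induction w using G.wf.induction with
  | _ w ih =>
  have hw : w ∈ univ := mem_univ w
  by_cases h : ∃ p : V × V, G.pred w = {p.1, p.2} ∧ p.1 ≠ p.2
  · obtain ⟨u, v, hpred, huv, hvertex⟩ : ∃ u v, G.pred w = {u, v} ∧ u ≠ v ∧
        vertexClauses G d w = pebStepClauses d u v w :=
      ⟨_, _, h.choose_spec.1, h.choose_spec.2, by rw [vertexClauses, dif_pos h]⟩
    have hu : u ∈ G.pred w := by rw [hpred]; exact mem_insert_self _ _
    have hv : v ∈ G.pred w := by rw [hpred]; exact mem_insert_of_mem (mem_singleton_self _)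
    obtain ⟨Su, hSu, hSuT, hu'⟩ := ih _ hu
    obtain ⟨Sv, hSv, hSvT, hv'⟩ := ih _ hv
    have hstep := grows_union_pebStepClauses hd hpred huv (G.ne_of_mem_pred hu)
      (G.ne_of_mem_pred hv) (mem_union_left Sv hu') (mem_union_right Su hv')
    rw [← hvertex] at hstep
    exact ⟨_, (hSu.union hSv).trans hstep,
      union_subset (union_subset hSuT hSvT) (subset_biUnion_of_mem _ hw),
      mem_union_right _ (hvertex ▸ posCl_mem_pebStepClauses hd _ _ _)⟩
  · have hsource : G.pred w = ∅ := by
      refine card_eq_zero.1 ((G.indeg w).resolve_right fun h2 => h ?_)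
      obtain ⟨u, v, huv, hpred⟩ := card_eq_two.1 h2
      exact ⟨(u, v), hpred, huv⟩
    have hw' : vertexClauses G d w = {posCl d w} := by rw [vertexClauses, dif_neg h]
    refine ⟨{posCl d w}, grows_insert_of_mem ∅ (Or.inl ⟨w, hsource, rfl⟩), ?_, mem_singleton_self _⟩
    rw [← hw']
    exact subset_biUnion_of_mem _ hw

noncomputable def refutationClauses (G : PebDag V) (d : ℕ) : RConfig (V × Fin d) :=
  univ.biUnion (vertexClauses G d) ∪
    (univ.image (fun i => {((G.sink, i), false)}) ∪ elimClauses d G.sink ∅)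

theorem exists_resRefutation_pebCnf_clauses_subset (hd : 0 < d) (G : PebDag V) :
    ∃ π : ResRefutation (pebCnf G d), π.clauses ⊆ refutationClauses G d := by
  obtain ⟨S, hS, hST, hz⟩ := exists_grows_posCl hd G G.sink
  set targets := univ.image fun i : Fin d => ({((G.sink, i), false)} : RClause (V × Fin d))
  have download : Grows (pebCnf G d) S (S ∪ targets) := by
    refine grows_union_of_subset fun C hC => ?_
    obtain ⟨i, -, rfl⟩ := mem_image.1 hC
    exact Or.inr (Or.inr ⟨i, rfl⟩)
  have elim : Grows (pebCnf G d) (S ∪ targets) (S ∪ targets ∪ elimClauses d G.sink ∅) :=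
    grows_union_elimClauses (fun _ _ => notMem_empty _) (mem_union_left _ hz)
      fun i => by rw [insert_empty]; exact mem_union_right _ (mem_image_of_mem _ (mem_univ i))
  obtain ⟨π, hπ⟩ := (hS.trans (download.trans elim)).exists_resRefutation_clauses_subset
    (mem_union_right _ (mem_elimClauses hd _ _))
  exact ⟨π, hπ.trans (by rw [union_assoc]; exact union_subset_union_left hST)⟩

theorem card_refutationClauses_le (hd : 0 < d) (G : PebDag V) :
    (refutationClauses G d).card ≤ 5 * d ^ 2 * Fintype.card V := by
  have hV : 0 < Fintype.card V := Fintype.card_pos_iff.2 ⟨G.sink⟩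
  have vertices : (univ.biUnion (vertexClauses G d)).card ≤ 3 * d ^ 2 * Fintype.card V :=
    card_biUnion_le.trans ((sum_le_sum fun w _ => card_vertexClauses_le hd G w).trans
      (by simp [mul_comm]))
  have targets : (univ.image fun i : Fin d => ({((G.sink, i), false)} : RClause (V × Fin d))).card
      ≤ d :=
    card_image_le.trans (by simp)
  calc (refutationClauses G d).card ≤ 3 * d ^ 2 * Fintype.card V + (d + d) :=
        (card_union_le _ _).trans (add_le_add vertices
          ((card_union_le _ _).trans (add_le_add targets (card_elimClauses_le _ _))))
    _ ≤ 5 * d ^ 2 * Fintype.card V := by nlinarith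

theorem card_le_of_mem_refutationClauses (hd : 0 < d) {G : PebDag V} {C : RClause (V × Fin d)}
    (hC : C ∈ refutationClauses G d) : C.card ≤ 3 * d := by
  simp only [refutationClauses, mem_union, mem_biUnion, mem_univ, true_and, mem_image] at hC
  rcases hC with ⟨w, hC⟩ | ⟨i, rfl⟩ | hC
  · exact card_le_of_mem_vertexClauses hd hC
  · rw [card_singleton]; omega
  · have := card_le_of_mem_elimClauses hC
    rw [card_empty] at this
    omega

end Refutation

/-- There is an absolute constant `c` such that for any DAG
`G` with a unique sink and all vertices of indegree 0 or 2, and any `d ≥ 1`,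
there is a resolution refutation of the pebbling contradiction `Peb_G^d` of
length at most `c·d²·|V(G)|` and width at most `c·d`. -/
theorem pebbling_contradiction_short_refutation :
    ∃ c : ℕ, 0 < c ∧
      ∀ (V : Type) [DecidableEq V] [Fintype V] (G : PebDag V) (d : ℕ), 1 ≤ d →
        ∃ π : ResRefutation (pebCnf G d),
          π.length ≤ c * d ^ 2 * Fintype.card V ∧ π.width ≤ c * d := by
  refine ⟨5, by norm_num, fun V _ _ G d hd => ?_⟩
  obtain ⟨π, hπ⟩ := exists_resRefutation_pebCnf_clauses_subset hd G
  refine ⟨π, (card_le_card hπ).trans (card_refutationClauses_le hd G), ?_⟩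
  exact π.width_le_of_forall_card_le fun C hC =>
    (card_le_of_mem_refutationClauses hd (hπ hC)).trans (by omega)
end

section
/- For every h ≥ 1, the black pebbling price of the pyramid graph of height h is exactly Peb(Π_h) = h + 2. -/
/-- Vertices of the pyramid graph of height `h`: the vertex `(L, i)` is the
`i`-th vertex (from the left) on level `L`, where `L + i ≤ h`. -/
abbrev PyrV (h : ℕ) := {p : ℕ × ℕ // p.1 + p.2 ≤ h}

/-- The immediate predecessors of a vertex in the pyramid graph: the `i`-th
vertex on level `L ≥ 1` has incoming edges from the `i`-th and `(i+1)`-st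
vertices on level `L - 1`; vertices on level `0` are sources. -/
def pyrPred (h : ℕ) (v : PyrV h) : Finset (PyrV h) :=
  if hv : v.1.1 = 0 then ∅
  else
    {⟨(v.1.1 - 1, v.1.2), by have := v.2; show v.1.1 - 1 + v.1.2 ≤ h; omega⟩,
     ⟨(v.1.1 - 1, v.1.2 + 1), by have := v.2; show v.1.1 - 1 + (v.1.2 + 1) ≤ h; omega⟩}

/-- The unique sink of the pyramid graph of height `h`. -/
def pyrSink (h : ℕ) : PyrV h := ⟨(h, 0), by show h + 0 ≤ h; omega⟩
/-- A move in the black pebble game: place a black pebble on a vertex all of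
whose immediate predecessors are pebbled (in particular on any source), or
remove a black pebble from any vertex. -/
inductive BMove {V : Type} [DecidableEq V] (pred : V → Finset V) :
    Finset V → Finset V → Prop
  | place {B : Finset V} {v : V} (h : pred v ⊆ B) : BMove pred B (insert v B)
  | remove {B : Finset V} {v : V} (h : v ∈ B) : BMove pred B (B.erase v)

/-- A complete black pebbling: starts with no pebbles and ends with a single
black pebble on the sink `z`. -/
structure BPebbling {V : Type} [DecidableEq V] (pred : V → Finset V) (z : V) where
  len : ℕ
  cfg : ℕ → Finset V
  init : cfg 0 = ∅
  final : cfg len = {z}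
  steps : ∀ t < len, BMove pred (cfg t) (cfg (t + 1))

/-- The cost of a black pebbling: the maximal number of pebbles used. -/
def BPebbling.cost {V : Type} [DecidableEq V] {pred : V → Finset V} {z : V}
    (P : BPebbling pred z) : ℕ :=
  (Finset.range (P.len + 1)).sup fun t => (P.cfg t).card

/-- The black pebbling price: the minimum cost of a complete black pebbling. -/
noncomputable def bPebPrice {V : Type} [DecidableEq V] (pred : V → Finset V) (z : V) : ℕ :=
  sInf { c | ∃ P : BPebbling pred z, P.cost = c }

/-!
Upper bound: the apex of a sub-pyramid of height `L` is pebbled with `L + 2` pebbles by pebbling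
its right predecessor recursively (`L + 1` pebbles), keeping that pebble while pebbling the left
predecessor (`L + 2`), and then placing the apex.

Lower bound: suppose one of the two boundary paths of the cone below a vertex `v` on level
`L ≥ 1` is pebble-free at time `s`, and `v` is pebbled at time `t`. Then at some moment in
`(s, t]` the cone of `v` carries `L + 2` pebbles. Induct on `L`, then on `t - s`: the predecessor
`u` of `v` on the free path is pebbled before `v`, so by induction `cone u` carries `L + 1` pebbles
at some moment `w`. Either `cone v \ cone u` also carries a pebble at time `w`, or the opposite
boundary path of `cone v`, which avoids `cone u`, is free at time `w`, and we restart from `w`.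
For the sink, the left boundary path is free at time `0`.
-/

section Pebbling

variable {V : Type} [DecidableEq V] {pred : V → Finset V}

theorem BMove.eq_insert_of_notMem_of_mem {B C : Finset V} {v : V} (m : BMove pred B C)
    (hB : v ∉ B) (hC : v ∈ C) : pred v ⊆ B ∧ C = insert v B := by
  cases m with
  | place hp =>
    rcases Finset.mem_insert.1 hC with rfl | hv
    · exact ⟨hp, rfl⟩
    · exact absurd hv hB
  | remove _ => exact absurd (Finset.mem_of_mem_erase hC) hB

theorem BMove.exists_place {cfg : ℕ → Finset V} {n : ℕ}
    (hmove : ∀ t < n, BMove pred (cfg t) (cfg (t + 1))) {v : V} {s t : ℕ}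
    (hst : s ≤ t) (htn : t ≤ n) (hs : v ∉ cfg s) (ht : v ∈ cfg t) :
    ∃ r, s ≤ r ∧ r < t ∧ pred v ⊆ cfg r ∧ cfg (r + 1) = insert v (cfg r) := by
  induction t with
  | zero =>
    obtain rfl : s = 0 := by omega
    exact absurd ht hs
  | succ t ih =>
    rcases Nat.lt_or_ge t s with hts | hts
    · obtain rfl : s = t + 1 := by omega
      exact absurd ht hs
    by_cases hvt : v ∈ cfg t
    · obtain ⟨r, hsr, hrt, hr⟩ := ih hts (by omega) hvt
      exact ⟨r, hsr, by omega, hr⟩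
    · exact ⟨t, hts, by omega, (hmove t (by omega)).eq_insert_of_notMem_of_mem hvt ht⟩

theorem BPebbling.card_cfg_le_cost {z : V} (P : BPebbling pred z) {t : ℕ} (ht : t ≤ P.len) :
    (P.cfg t).card ≤ P.cost :=
  Finset.le_sup (f := fun t => (P.cfg t).card) (Finset.mem_range.2 (Nat.lt_succ_of_le ht))

theorem bPebPrice_eq {z : V} {c : ℕ} (hle : ∃ P : BPebbling pred z, P.cost ≤ c)
    (hge : ∀ P : BPebbling pred z, c ≤ P.cost) : bPebPrice pred z = c := by
  obtain ⟨P, hP⟩ := hle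
  have hP_mem : P.cost ∈ {c | ∃ P : BPebbling pred z, P.cost = c} := ⟨P, rfl⟩
  refine le_antisymm ((Nat.sInf_le hP_mem).trans hP) (le_csInf ⟨_, hP_mem⟩ ?_)
  rintro _ ⟨Q, rfl⟩
  exact hge Q

def CappedMove (pred : V → Finset V) (c : ℕ) (B C : Finset V) : Prop :=
  BMove pred B C ∧ C.card ≤ c

open Relation

theorem exists_seq_of_reflTransGen_cappedMove {c : ℕ} {B C : Finset V} (hB : B.card ≤ c)
    (hBC : ReflTransGen (CappedMove pred c) B C) :
    ∃ (len : ℕ) (cfg : ℕ → Finset V), cfg 0 = B ∧ cfg len = C ∧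
      (∀ t < len, BMove pred (cfg t) (cfg (t + 1))) ∧ ∀ t ≤ len, (cfg t).card ≤ c := by
  induction hBC with
  | refl => exact ⟨0, fun _ => B, rfl, rfl, fun _ h => absurd h (Nat.not_lt_zero _), fun _ _ => hB⟩
  | @tail C D _ hCD ih =>
    obtain ⟨len, cfg, h0, hlen, hsteps, hcard⟩ := ih
    refine ⟨len + 1, fun t => if t ≤ len then cfg t else D, by simp [h0], by simp, ?_, ?_⟩
    · intro t ht
      rcases Nat.lt_or_ge t len with htl | htl
      · simpa [htl.le, Nat.succ_le_of_lt htl] using hsteps t htl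
      · obtain rfl : t = len := by omega
        simpa [hlen] using hCD.1
    · intro t _
      dsimp only
      split_ifs with htl
      · exact hcard t htl
      · exact hCD.2

theorem BPebbling.exists_cost_le_of_reflTransGen {z : V} {c : ℕ}
    (hz : ReflTransGen (CappedMove pred c) ∅ {z}) : ∃ P : BPebbling pred z, P.cost ≤ c := by
  obtain ⟨len, cfg, h0, hlen, hsteps, hcard⟩ :=
    exists_seq_of_reflTransGen_cappedMove (by simp) hz
  exact ⟨⟨len, cfg, h0, hlen, hsteps⟩, Finset.sup_le fun t ht =>
    hcard t (Nat.lt_succ_iff.1 (Finset.mem_range.1 ht))⟩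

theorem reflTransGen_cappedMove_place_of_pair {c : ℕ} {a b v : V} {B : Finset V}
    (hpred : pred v ⊆ insert a (insert b B)) (ha : a ∉ insert b B) (hb : b ∉ B)
    (hva : v ≠ a) (hvb : v ≠ b) (hc : B.card + 3 ≤ c) :
    ReflTransGen (CappedMove pred c) (insert a (insert b B)) (insert v B) := by
  have hab : a ≠ b := fun he => ha (he ▸ Finset.mem_insert_self a B)
  have hC : (insert v (insert a (insert b B))).card ≤ c := by
    have := Finset.card_insert_le v (insert a (insert b B))
    have := Finset.card_insert_le a (insert b B)
    have := Finset.card_insert_le b B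
    omega
  set C := insert v (insert a (insert b B))
  have place_v : CappedMove pred c (insert a (insert b B)) C := ⟨.place hpred, hC⟩
  have remove_a : CappedMove pred c C (C.erase a) :=
    ⟨.remove (by simp [C]), Finset.card_erase_le.trans hC⟩
  have remove_b : CappedMove pred c (C.erase a) ((C.erase a).erase b) :=
    ⟨.remove (by simp [C, hab.symm]), Finset.card_erase_le.trans (Finset.card_erase_le.trans hC)⟩
  have hfinal : (C.erase a).erase b = insert v B := by
    rw [Finset.erase_insert_of_ne hva, Finset.erase_insert ha, Finset.erase_insert_of_ne hvb,
      Finset.erase_insert hb]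
  exact hfinal ▸ ((ReflTransGen.single place_v).tail remove_a).tail remove_b

end Pebbling

namespace Pyramid

variable {h : ℕ}

/-- The sub-pyramid with apex `v`: the vertices from which `v` is reachable. -/
def cone (v : PyrV h) : Set (PyrV h) :=
  {x | v.1.2 ≤ x.1.2 ∧ x.1.1 + x.1.2 ≤ v.1.1 + v.1.2}

/-- The left (`false`) and right (`true`) boundary paths of `cone v`. -/
def edge (v : PyrV h) : Bool → Set (PyrV h)
  | false => {x | x.1.2 = v.1.2 ∧ x.1.1 ≤ v.1.1}
  | true => {x | x.1.1 + x.1.2 = v.1.1 + v.1.2 ∧ x.1.1 ≤ v.1.1}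

/-- `u` is the predecessor of `v` lying on `edge v side`. -/
def IsPredOn (side : Bool) (u v : PyrV h) : Prop :=
  u.1.1 + 1 = v.1.1 ∧ u.1.2 = v.1.2 + side.toNat

theorem self_mem_cone (v : PyrV h) : v ∈ cone v := by
  simp [cone]

theorem self_mem_edge (v : PyrV h) (side : Bool) : v ∈ edge v side := by
  cases side <;> simp [edge]

theorem edge_subset_cone (v : PyrV h) (side : Bool) : edge v side ⊆ cone v := by
  intro x hx
  cases side <;> simp [edge, cone] at * <;> omega

theorem exists_isPredOn {v : PyrV h} (hv : v.1.1 ≠ 0) (side : Bool) :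
    ∃ u, IsPredOn side u v := by
  have := v.2
  refine ⟨⟨(v.1.1 - 1, v.1.2 + side.toNat), ?_⟩, by dsimp only; omega, rfl⟩
  cases side <;> simp <;> omega

namespace IsPredOn

variable {side : Bool} {u v : PyrV h}

theorem ne (huv : IsPredOn side u v) : u ≠ v := by
  rintro rfl
  exact absurd huv.1 (Nat.succ_ne_self _)

theorem mem_pyrPred (huv : IsPredOn side u v) : u ∈ pyrPred h v := by
  obtain ⟨h1, h2⟩ := huv
  rw [pyrPred, dif_neg (by omega)]
  cases side <;> simp [Subtype.ext_iff, Prod.ext_iff] at * <;> omega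

theorem mem_cone (huv : IsPredOn side u v) : u ∈ cone v := by
  cases side <;> simp [IsPredOn, cone] at * <;> omega

theorem mem_edge (huv : IsPredOn side u v) : u ∈ edge v side := by
  cases side <;> simp [IsPredOn, edge] at * <;> omega

theorem cone_subset (huv : IsPredOn side u v) : cone u ⊆ cone v := by
  intro x hx
  cases side <;> simp [IsPredOn, cone] at * <;> omega

theorem edge_subset (huv : IsPredOn side u v) : edge u side ⊆ edge v side := by
  intro x hx
  cases side <;> simp [IsPredOn, edge] at * <;> omega

theorem notMem_cone_of_mem_edge (huv : IsPredOn side u v) {x : PyrV h}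
    (hx : x ∈ edge v !side) : x ∉ cone u := by
  cases side <;> simp [IsPredOn, edge, cone] at * <;> omega

theorem ne_of_isPredOn_true {u₁ u₂ : PyrV h} (hu₁ : IsPredOn false u₁ v)
    (hu₂ : IsPredOn true u₂ v) : u₁ ≠ u₂ := by
  rintro rfl
  have := hu₁.2.symm.trans hu₂.2
  simp at this

end IsPredOn

theorem pyrPred_subset {v u₁ u₂ : PyrV h} {B : Finset (PyrV h)} (hu₁ : IsPredOn false u₁ v)
    (hu₂ : IsPredOn true u₂ v) (h₁ : u₁ ∈ B) (h₂ : u₂ ∈ B) : pyrPred h v ⊆ B := by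
  obtain ⟨h11, h12⟩ := hu₁
  obtain ⟨h21, h22⟩ := hu₂
  rw [pyrPred, dif_neg (by omega), Finset.insert_subset_iff, Finset.singleton_subset_iff]
  constructor
  · convert h₁ using 1; ext <;> simp at h12 ⊢ <;> omega
  · convert h₂ using 1; ext <;> simp at h22 ⊢ <;> omega

open Relation in
theorem reflTransGen_cappedMove_insert (L : ℕ) :
    ∀ {v : PyrV h}, v.1.1 = L → ∀ {B : Finset (PyrV h)} {c : ℕ},
      (∀ x ∈ B, x ∉ cone v) → B.card + L + 2 ≤ c →
      ReflTransGen (CappedMove (pyrPred h) c) B (insert v B) := by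
  induction L with
  | zero =>
    intro v hv B c _ hc
    have hsrc : pyrPred h v = ∅ := by rw [pyrPred, dif_pos hv]
    exact .single ⟨.place (by simp [hsrc]), (Finset.card_insert_le v B).trans (by omega)⟩
  | succ L ih =>
    intro v hv B c hB hc
    obtain ⟨u₁, hu₁⟩ := exists_isPredOn (v := v) (by omega) false
    obtain ⟨u₂, hu₂⟩ := exists_isPredOn (v := v) (by omega) true
    have hu₂B : u₂ ∉ B := fun hx => hB u₂ hx hu₂.mem_cone
    have hu₁B' : u₁ ∉ insert u₂ B := by
      rw [Finset.mem_insert, not_or]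
      exact ⟨hu₁.ne_of_isPredOn_true hu₂, fun hx => hB u₁ hx hu₁.mem_cone⟩
    have pebble_u₂ := ih (v := u₂) (by have := hu₂.1; omega) (B := B) (c := c)
      (fun x hx hxu => hB x hx (hu₂.cone_subset hxu)) (by omega)
    have pebble_u₁ := ih (v := u₁) (by have := hu₁.1; omega) (B := insert u₂ B) (c := c)
      (fun x hx hxu => by
        rcases Finset.mem_insert.1 hx with rfl | hx
        · exact hu₁.notMem_cone_of_mem_edge hu₂.mem_edge hxu
        · exact hB x hx (hu₁.cone_subset hxu))
      (by have := Finset.card_insert_le u₂ B; omega)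
    exact (pebble_u₂.trans pebble_u₁).trans (reflTransGen_cappedMove_place_of_pair
      (pyrPred_subset hu₁ hu₂ (by simp) (by simp)) hu₁B' hu₂B hu₁.ne.symm hu₂.ne.symm (by omega))

theorem exists_bPebbling_cost_le (h : ℕ) :
    ∃ P : BPebbling (pyrPred h) (pyrSink h), P.cost ≤ h + 2 :=
  BPebbling.exists_cost_le_of_reflTransGen
    (reflTransGen_cappedMove_insert h (v := pyrSink h) rfl (by simp) (by simp))

variable {n : ℕ} {cfg : ℕ → Finset (PyrV h)}

def ConeReaches (cfg : ℕ → Finset (PyrV h)) (v : PyrV h) (k s t : ℕ) : Prop :=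
  ∃ w, s < w ∧ w ≤ t ∧ ∃ S ⊆ cfg w, (S : Set (PyrV h)) ⊆ cone v ∧ k ≤ S.card

theorem ConeReaches.mono_left {v : PyrV h} {k s s' t : ℕ} (hs : s ≤ s')
    (hv : ConeReaches cfg v k s' t) : ConeReaches cfg v k s t := by
  obtain ⟨w, hw, hwt, hS⟩ := hv
  exact ⟨w, by omega, hwt, hS⟩

theorem coneReaches_of_level_one (hmove : ∀ t < n, BMove (pyrPred h) (cfg t) (cfg (t + 1)))
    {v : PyrV h} (hv : v.1.1 = 1) {s t : ℕ} (hst : s ≤ t)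
    (htn : t ≤ n) (hs : v ∉ cfg s) (ht : v ∈ cfg t) : ConeReaches cfg v 3 s t := by
  obtain ⟨r, hsr, hrt, hpred, hplace⟩ := BMove.exists_place hmove hst htn hs ht
  obtain ⟨u₁, hu₁⟩ := exists_isPredOn (v := v) (by omega) false
  obtain ⟨u₂, hu₂⟩ := exists_isPredOn (v := v) (by omega) true
  refine ⟨r + 1, by omega, hrt, {u₁, u₂, v}, ?_, ?_, ?_⟩
  · rw [hplace, Finset.insert_subset_iff, Finset.insert_subset_iff, Finset.singleton_subset_iff]
    exact ⟨Finset.mem_insert_of_mem (hpred hu₁.mem_pyrPred),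
      Finset.mem_insert_of_mem (hpred hu₂.mem_pyrPred), Finset.mem_insert_self v _⟩
  · simp [Set.insert_subset_iff, hu₁.mem_cone, hu₂.mem_cone, self_mem_cone]
  · rw [Finset.card_insert_of_notMem, Finset.card_pair hu₂.ne]
    simp [hu₁.ne_of_isPredOn_true hu₂, hu₁.ne]

theorem coneReaches_of_pred (hmove : ∀ t < n, BMove (pyrPred h) (cfg t) (cfg (t + 1)))
    {L : ℕ} {v : PyrV h} (hv : v.1.1 = L + 2)
    (ih : ∀ (u : PyrV h), u.1.1 = L + 1 → ∀ (side : Bool) (s t : ℕ), s ≤ t → t ≤ n →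
      (∀ x ∈ edge u side, x ∉ cfg s) → u ∈ cfg t → ConeReaches cfg u (L + 3) s t)
    (side : Bool) {s t : ℕ} (hst : s ≤ t) (htn : t ≤ n)
    (hfree : ∀ x ∈ edge v side, x ∉ cfg s) (ht : v ∈ cfg t) :
    ConeReaches cfg v (L + 4) s t := by
  obtain ⟨d, hd⟩ : ∃ d, t - s = d := ⟨_, rfl⟩
  induction d using Nat.strong_induction_on generalizing s side with
  | _ d ihd =>
  obtain ⟨r, hsr, hrt, hpred, -⟩ :=
    BMove.exists_place hmove hst htn (hfree v (self_mem_edge v side)) ht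
  obtain ⟨u, hu⟩ := exists_isPredOn (v := v) (by omega) side
  obtain ⟨w, hsw, hwr, S, hSw, hSu, hScard⟩ :=
    ih u (by have := hu.1; omega) side s r hsr (by omega)
      (fun x hx => hfree x (hu.edge_subset hx)) (hpred hu.mem_pyrPred)
  by_cases hout : ∃ x ∈ cfg w, x ∈ cone v ∧ x ∉ cone u
  · obtain ⟨x, hxw, hxv, hxu⟩ := hout
    refine ⟨w, hsw, by omega, insert x S, Finset.insert_subset hxw hSw, ?_, ?_⟩
    · rw [Finset.coe_insert]
      exact Set.insert_subset hxv (hSu.trans hu.cone_subset)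
    · rw [Finset.card_insert_of_notMem fun hxS => hxu (hSu hxS)]
      omega
  · push Not at hout
    have hfree' : ∀ x ∈ edge v !side, x ∉ cfg w := fun x hx hxw =>
      hu.notMem_cone_of_mem_edge hx (hout x hxw (edge_subset_cone v _ hx))
    exact (ihd (t - w) (by omega) (!side) (by omega) hfree' rfl).mono_left hsw.le

theorem coneReaches_of_edge_free (hmove : ∀ t < n, BMove (pyrPred h) (cfg t) (cfg (t + 1)))
    (L : ℕ) : ∀ (v : PyrV h), v.1.1 = L + 1 → ∀ (side : Bool) (s t : ℕ), s ≤ t → t ≤ n →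
      (∀ x ∈ edge v side, x ∉ cfg s) → v ∈ cfg t → ConeReaches cfg v (L + 3) s t := by
  induction L with
  | zero =>
    intro v hv side s t hst htn hfree ht
    exact coneReaches_of_level_one hmove hv hst htn (hfree v (self_mem_edge v side)) ht
  | succ L ih =>
    intro v hv side s t hst htn hfree ht
    exact coneReaches_of_pred hmove hv ih side hst htn hfree ht

theorem add_two_le_cost (hh : 1 ≤ h) (P : BPebbling (pyrPred h) (pyrSink h)) :
    h + 2 ≤ P.cost := by
  obtain ⟨L, rfl⟩ : ∃ L, h = L + 1 := ⟨h - 1, by omega⟩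
  obtain ⟨w, -, hw, S, hSw, -, hS⟩ :=
    coneReaches_of_edge_free P.steps L (pyrSink (L + 1)) rfl false 0 P.len (Nat.zero_le _)
      le_rfl (fun x _ => by simp [P.init]) (by simp [P.final])
  exact hS.trans ((Finset.card_le_card hSw).trans (P.card_cfg_le_cost hw))

end Pyramid

/-- For every `h ≥ 1`, the black pebbling price of the
pyramid graph of height `h` is exactly `Peb(Π_h) = h + 2`. -/
theorem pyramid_black_pebbling_price (h : ℕ) (hh : 1 ≤ h) :
    bPebPrice (pyrPred h) (pyrSink h) = h + 2 :=
  bPebPrice_eq (Pyramid.exists_bPebbling_cost_le h) (Pyramid.add_two_le_cost hh)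
end

section
/- Let G be a layered DAG possessing the Limited Hiding-Cardinality property, and let P = (P_0 = (∅,∅), P_1, ..., P_τ) be any black-white pebbling on G starting from the empty configuration. Then for every t ∈ {1,...,τ}, pot(P_t) ≤ 2 · max_{s ≤ t} cost(P_s), where cost(B,W) = |B ∪ W|. -/
/-- A layered DAG: vertices are partitioned into levels `0, 1, ..., height`,
every edge goes from some level `L - 1` to level `L` (`pred v` is the finite
set of immediate predecessors of `v`), all sources are on level `0`, and there
is a unique sink, located on the top level. -/
structure LGraph (V : Type) where
  pred : V → Finset V
  height : ℕ
  lvl : V → ℕ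
  lvl_le : ∀ v, lvl v ≤ height
  edge_lvl : ∀ u v, u ∈ pred v → lvl v = lvl u + 1
  source_lvl : ∀ v, pred v = ∅ ↔ lvl v = 0
  sink : V
  sink_unique : ∀ v, (∀ w, v ∉ pred w) ↔ v = sink
  sink_lvl : lvl sink = height
/-- `l` is a path from a source to `w` (in a graph given by its immediate
predecessor function `pred`): consecutive vertices are joined by edges, the
first vertex is a source, and the last vertex is `w`. -/
def IsSourcePath {V : Type} (pred : V → Finset V) (l : List V) (w : V) : Prop :=
  l.Chain' (fun a b => a ∈ pred b) ∧ (∃ s, l.head? = some s ∧ pred s = ∅) ∧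
    l.getLast? = some w

/-- A vertex set `U` hides the vertex `w` if every path from a source to `w`
intersects `U`. -/
def Hides {V : Type} (pred : V → Finset V) (U : Set V) (w : V) : Prop :=
  ∀ l : List V, IsSourcePath pred l w → ∃ u ∈ U, u ∈ l

/-- `U` hides the vertex set `B` if it hides every vertex of `B`. -/
def HidesSet {V : Type} (pred : V → Finset V) (U B : Set V) : Prop :=
  ∀ w ∈ B, Hides pred U w

/-- `Reaches pred u v` : the vertex `v` is reachable from `u`. -/
def Reaches {V : Type} (pred : V → Finset V) : V → V → Prop :=
  Relation.ReflTransGen fun a b => a ∈ pred b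
/-- The `j`-th partial measure of a vertex set `U` in a layered DAG:
`j + 2·|U^{≥j}|` if the part `U^{≥j}` of `U` on level `j` or higher is
nonempty, and `0` otherwise. -/
def mjMeasure {V : Type} (G : LGraph V) (U : Finset V) (j : ℕ) : ℕ :=
  if (U.filter fun u => j ≤ G.lvl u).Nonempty then
    j + 2 * (U.filter fun u => j ≤ G.lvl u).card
  else 0

/-- The measure of a vertex set `U`: the maximum of its partial measures. -/
def klMeasure {V : Type} (G : LGraph V) (U : Finset V) : ℕ :=
  (Finset.range (G.height + 1)).sup (mjMeasure G U)

/-- The potential of a black-white pebble configuration `(B, W)`: the minimum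
measure of a vertex set `U` such that `U ∪ W` hides `B`. -/
noncomputable def pot {V : Type} [DecidableEq V] (G : LGraph V) (B W : Finset V) : ℕ :=
  sInf { m | ∃ U : Finset V, HidesSet G.pred (↑(U ∪ W)) (↑B) ∧ klMeasure G U = m }
/-- A move in the black-white pebble game. -/
inductive BWMove {V : Type} [DecidableEq V] (pred : V → Finset V) :
    Finset V × Finset V → Finset V × Finset V → Prop
  | placeBlack {B W : Finset V} {v : V} (hv : v ∉ B ∪ W) (hp : ∀ u ∈ pred v, u ∈ B ∪ W) :
      BWMove pred (B, W) (insert v B, W)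
  | removeBlack {B W : Finset V} {v : V} (hv : v ∈ B) :
      BWMove pred (B, W) (B.erase v, W)
  | placeWhite {B W : Finset V} {v : V} (hv : v ∉ B ∪ W) :
      BWMove pred (B, W) (B, insert v W)
  | removeWhite {B W : Finset V} {v : V} (hv : v ∈ W) (hp : ∀ u ∈ pred v, u ∈ B ∪ W) :
      BWMove pred (B, W) (B, W.erase v)

/-- A complete black-white pebbling: starts at `(∅, ∅)` and ends at `({z}, ∅)`. -/
structure BWPebbling {V : Type} [DecidableEq V] (pred : V → Finset V) (z : V) where
  len : ℕ
  cfg : ℕ → Finset V × Finset V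
  init : cfg 0 = (∅, ∅)
  final : cfg len = ({z}, ∅)
  steps : ∀ t < len, BWMove pred (cfg t) (cfg (t + 1))

/-- The cost of a black-white pebbling: the maximum of `|B ∪ W|` over its
configurations. -/
def BWPebbling.cost {V : Type} [DecidableEq V] {pred : V → Finset V} {z : V}
    (P : BWPebbling pred z) : ℕ :=
  (Finset.range (P.len + 1)).sup fun t => ((P.cfg t).1 ∪ (P.cfg t).2).card

/-- The black-white pebbling price: the minimum cost of a complete black-white
pebbling. -/
noncomputable def bwPebPrice {V : Type} [DecidableEq V] (pred : V → Finset V) (z : V) : ℕ :=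
  sInf { c | ∃ P : BWPebbling pred z, P.cost = c }

/-- A black-white pebbling on a graph starting from the empty configuration
(with no requirement on the final configuration). -/
structure BWPlay {V : Type} [DecidableEq V] (pred : V → Finset V) where
  len : ℕ
  cfg : ℕ → Finset V × Finset V
  init : cfg 0 = (∅, ∅)
  steps : ∀ t < len, BWMove pred (cfg t) (cfg (t + 1))

/-! By the LHC property, every configuration `(B, W)` of the play (all of them are disjoint) has a
set `U` of measure `pot (B, W)` such that `U ∪ W` hides `B` and `|U| ≤ |B ∪ W|`, with strict
inequality when a white pebble is present. After a move, `U` itself still works, except when a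
black pebble is placed on, or a white pebble removed from, a source `v`; then `insert v U` works,
and adding a level-`0` vertex changes only the `0`-th partial measure, which becomes at most
`2 (|U| + 1)`, that is, at most twice the larger of the costs before and after the move. -/
section Hiding

variable {V : Type} {pred : V → Finset V}

theorem IsSourcePath.singleton {w : V} (hw : pred w = ∅) : IsSourcePath pred [w] w :=
  ⟨List.isChain_singleton w, ⟨w, rfl, hw⟩, rfl⟩

theorem IsSourcePath.concat {l : List V} {u w : V} (hl : IsSourcePath pred l u)
    (hu : u ∈ pred w) : IsSourcePath pred (l ++ [w]) w := by
  obtain ⟨hc, ⟨s, hs, hsrc⟩, hlast⟩ := hl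
  refine ⟨hc.append (List.isChain_singleton w) ?_, ⟨s, ?_, hsrc⟩, List.getLast?_concat⟩
  · simp_all
  · cases l <;> simp_all

theorem IsSourcePath.exists_eq_concat {l : List V} {w : V} (hl : IsSourcePath pred l w)
    (hw : pred w ≠ ∅) :
    ∃ l₁ u, l = l₁ ++ [w] ∧ u ∈ pred w ∧ IsSourcePath pred l₁ u := by
  obtain ⟨hc, ⟨s, hs, hsrc⟩, hlast⟩ := hl
  obtain rfl | ⟨l₁, w', rfl⟩ := l.eq_nil_or_concat'
  · simp at hs
  obtain rfl : w = w' := by simpa using hlast.symm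
  obtain rfl | hne := eq_or_ne l₁ []
  · obtain rfl : w = s := by simpa using hs
    exact absurd hsrc hw
  have hlast₁ := List.getLast?_eq_some_getLast hne
  refine ⟨l₁, l₁.getLast hne, rfl, ?_, ⟨hc.left_of_append, ⟨s, ?_, hsrc⟩, hlast₁⟩⟩
  · exact (List.isChain_append.1 hc).2.2 _ hlast₁ w rfl
  · simpa [List.head?_append, List.head?_eq_some_head hne] using hs

theorem hides_of_mem {S : Set V} {w : V} (hw : w ∈ S) : Hides pred S w :=
  fun _ hl => ⟨w, hw, List.mem_of_mem_getLast? hl.2.2⟩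

theorem Hides.mono {S T : Set V} (hST : S ⊆ T) {w : V} (h : Hides pred S w) :
    Hides pred T w := fun l hl => by
  obtain ⟨u, hu, hul⟩ := h l hl
  exact ⟨u, hST hu, hul⟩

theorem hides_iff {S : Set V} {w : V} :
    Hides pred S w ↔ w ∈ S ∨ pred w ≠ ∅ ∧ ∀ u ∈ pred w, Hides pred S u := by
  refine ⟨fun h => or_iff_not_imp_left.2 fun hwS => ?_, ?_⟩
  · have hw : pred w ≠ ∅ := fun hw => by
      obtain ⟨x, hxS, hx⟩ := h _ (IsSourcePath.singleton hw)
      exact hwS (by simp_all)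
    refine ⟨hw, fun u hu l hl => ?_⟩
    obtain ⟨x, hxS, hx⟩ := h _ (hl.concat hu)
    rcases List.mem_append.1 hx with hx | hx
    · exact ⟨x, hxS, hx⟩
    · rw [List.mem_singleton.1 hx] at hxS
      exact absurd hxS hwS
  · rintro (hwS | ⟨hw, hpred⟩) l hl
    · exact hides_of_mem hwS l hl
    · obtain ⟨l₁, u, rfl, hu, hl₁⟩ := hl.exists_eq_concat hw
      obtain ⟨x, hxS, hx⟩ := hpred u hu l₁ hl₁
      exact ⟨x, hxS, List.mem_append_left _ hx⟩

theorem HidesSet.mono {S T B C : Set V} (hST : S ⊆ T) (hCB : C ⊆ B)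
    (h : HidesSet pred S B) : HidesSet pred T C :=
  fun w hw => (h w (hCB hw)).mono hST

end Hiding

/-- A path through `v` passes through a predecessor of `v`; those in `B` are hidden by `T` by
induction on the level. -/
theorem HidesSet.of_insert {V : Type} {G : LGraph V} {T B : Set V} {v : V}
    (hB : HidesSet G.pred (insert v T) B) (hv : G.pred v ≠ ∅)
    (hpred : ∀ u ∈ G.pred v, u ∈ B ∨ u ∈ T) : HidesSet G.pred T B := by
  suffices h : ∀ n w, G.lvl w = n → Hides G.pred (insert v T) w → Hides G.pred T w from
    fun w hw => h _ w rfl (hB w hw)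
  intro n
  induction n using Nat.strong_induction_on with
  | _ n ih =>
  rintro w rfl hw
  have hlt : ∀ u ∈ G.pred w, G.lvl u < G.lvl w := fun u hu => by
    rw [G.edge_lvl u w hu]; omega
  rcases hides_iff.1 hw with (rfl | hwT) | ⟨hwsrc, hpredw⟩
  · refine hides_iff.2 (Or.inr ⟨hv, fun u hu => ?_⟩)
    rcases hpred u hu with huB | huT
    · exact ih _ (hlt u hu) u rfl (hB u huB)
    · exact hides_of_mem huT
  · exact hides_of_mem hwT
  · exact hides_iff.2 (Or.inr ⟨hwsrc, fun u hu => ih _ (hlt u hu) u rfl (hpredw u hu)⟩)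

section Potential

variable {V : Type} (G : LGraph V)

theorem mjMeasure_zero_le (U : Finset V) : mjMeasure G U 0 ≤ 2 * U.card := by
  unfold mjMeasure
  split_ifs
  · simp
  · exact Nat.zero_le _

theorem mjMeasure_insert_of_lvl_eq_zero [DecidableEq V] (U : Finset V) {v : V}
    (hv : G.lvl v = 0) {j : ℕ} (hj : j ≠ 0) : mjMeasure G (insert v U) j = mjMeasure G U j := by
  have hjv : ¬j ≤ G.lvl v := by omega
  simp only [mjMeasure, Finset.filter_insert, hjv, if_false]

theorem klMeasure_insert_le [DecidableEq V] (U : Finset V) {v : V} (hv : G.lvl v = 0) :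
    klMeasure G (insert v U) ≤ max (klMeasure G U) (2 * (U.card + 1)) := by
  refine Finset.sup_le fun j hj => ?_
  rcases eq_or_ne j 0 with rfl | hj0
  · calc mjMeasure G (insert v U) 0 ≤ 2 * (insert v U).card := mjMeasure_zero_le G _
      _ ≤ 2 * (U.card + 1) := by gcongr; exact Finset.card_insert_le v U
      _ ≤ _ := le_max_right _ _
  · rw [mjMeasure_insert_of_lvl_eq_zero G U hv hj0]
    exact (Finset.le_sup hj).trans (le_max_left _ _)

variable [DecidableEq V]

theorem pot_le_klMeasure {B W U : Finset V} (h : HidesSet G.pred ↑(U ∪ W) ↑B) :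
    pot G B W ≤ klMeasure G U :=
  Nat.sInf_le ⟨U, h, rfl⟩

theorem pot_empty : pot G ∅ ∅ = 0 :=
  Nat.eq_zero_of_le_zero <| (pot_le_klMeasure G (U := ∅) (by simp [HidesSet])).trans <| by
    simp [klMeasure, mjMeasure]

variable {G} {B W U : Finset V}

theorem pot_le_of_subset (hU : HidesSet G.pred ↑(U ∪ W) ↑B) {B' W' : Finset V} (hB : B' ⊆ B)
    (hW : W ⊆ W') : pot G B' W' ≤ klMeasure G U :=
  pot_le_klMeasure G <| hU.mono (by gcongr) (by gcongr)

theorem pot_insert_black_le (hU : HidesSet G.pred ↑(U ∪ W) ↑B) {v : V}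
    (hv : ∀ u ∈ G.pred v, u ∈ B ∪ W) :
    pot G (insert v B) W ≤ max (klMeasure G U) (2 * (U.card + 1)) := by
  by_cases hsrc : G.pred v = ∅
  · refine (pot_le_klMeasure G (U := insert v U) ?_).trans
      (klMeasure_insert_le G U ((G.source_lvl v).1 hsrc))
    rw [Finset.coe_insert]
    refine Set.forall_mem_insert.2 ⟨hides_of_mem (by simp), hU.mono ?_ subset_rfl⟩
    exact Finset.coe_subset.2 (Finset.union_subset_union_left (Finset.subset_insert v U))
  · refine (pot_le_klMeasure G ?_).trans (le_max_left _ _)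
    rw [Finset.coe_insert]
    refine Set.forall_mem_insert.2 ⟨hides_iff.2 (Or.inr ⟨hsrc, fun u hu => ?_⟩), hU⟩
    rcases Finset.mem_union.1 (hv u hu) with huB | huW
    · exact hU u huB
    · exact hides_of_mem (by simp [huW])

theorem pot_erase_white_le (hU : HidesSet G.pred ↑(U ∪ W) ↑B) {v : V} (hvW : v ∈ W)
    (hv : ∀ u ∈ G.pred v, u ∈ B ∪ W) :
    pot G B (W.erase v) ≤ max (klMeasure G U) (2 * (U.card + 1)) := by
  by_cases hsrc : G.pred v = ∅
  · refine (pot_le_klMeasure G (U := insert v U) (hU.mono ?_ subset_rfl)).trans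
      (klMeasure_insert_le G U ((G.source_lvl v).1 hsrc))
    intro x
    simp only [Finset.coe_union, Finset.coe_insert, Finset.coe_erase]
    by_cases x = v <;> simp_all
  · refine (pot_le_klMeasure G
      (HidesSet.of_insert (v := v) (hU.mono ?_ subset_rfl) hsrc ?_)).trans (le_max_left _ _)
    · intro x
      simp only [Finset.coe_union, Finset.coe_erase]
      by_cases x = v <;> simp_all
    · intro u hu
      have huv : u ≠ v := fun h => by have := G.edge_lvl u v hu; rw [h] at this; omega
      rcases Finset.mem_union.1 (hv u hu) with huB | huW
      · exact Or.inl huB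
      · exact Or.inr (by simp [huW, huv])

end Potential

def LGraph.HasLHC {V : Type} [DecidableEq V] (G : LGraph V) : Prop :=
  ∀ B W : Finset V, Disjoint B W →
    ∃ U : Finset V, HidesSet G.pred (↑(U ∪ W)) (↑B) ∧
      pot G B W = klMeasure G U ∧ (U = B ∨ U.card < B.card + W.card)

theorem BWMove.disjoint {V : Type} [DecidableEq V] {pred : V → Finset V} {B W B' W' : Finset V}
    (hm : BWMove pred (B, W) (B', W')) (hd : Disjoint B W) : Disjoint B' W' := by
  cases hm with
  | placeBlack hv => exact Finset.disjoint_insert_left.2 ⟨fun h => hv (by simp [h]), hd⟩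
  | removeBlack => exact hd.mono_left (Finset.erase_subset _ _)
  | placeWhite hv => exact Finset.disjoint_insert_right.2 ⟨fun h => hv (by simp [h]), hd⟩
  | removeWhite => exact hd.mono_right (Finset.erase_subset _ _)

theorem LGraph.HasLHC.pot_le_of_move {V : Type} [DecidableEq V] {G : LGraph V} (hG : G.HasLHC)
    {B W B' W' : Finset V} (hd : Disjoint B W) (hm : BWMove G.pred (B, W) (B', W')) {c : ℕ}
    (hpot : pot G B W ≤ 2 * c) (hc : (B ∪ W).card ≤ c) (hc' : (B' ∪ W').card ≤ c) :
    pot G B' W' ≤ 2 * c := by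
  obtain ⟨U, hU, hpotU, hcard⟩ := hG B W hd
  rw [hpotU] at hpot
  rw [Finset.card_union_of_disjoint hd] at hc
  cases hm with
  | placeBlack hv hp =>
    have hUc : U.card ≤ B.card + W.card := by rcases hcard with rfl | h <;> omega
    rw [Finset.insert_union, Finset.card_insert_of_notMem hv,
      Finset.card_union_of_disjoint hd] at hc'
    exact (pot_insert_black_le hU hp).trans (max_le hpot (by omega))
  | removeBlack => exact (pot_le_of_subset hU (B.erase_subset _) subset_rfl).trans hpot
  | placeWhite => exact (pot_le_of_subset hU subset_rfl (W.subset_insert _)).trans hpot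
  | removeWhite hv hp =>
    have hW : 0 < W.card := Finset.card_pos.2 ⟨_, hv⟩
    have hUc : U.card < B.card + W.card := by rcases hcard with rfl | h <;> omega
    exact (pot_erase_white_le hU hv hp).trans (max_le hpot (by omega))

namespace BWPlay

variable {V : Type} [DecidableEq V]

theorem disjoint {pred : V → Finset V} (P : BWPlay pred) :
    ∀ t ≤ P.len, Disjoint (P.cfg t).1 (P.cfg t).2
  | 0, _ => by simp [P.init]
  | t + 1, ht => (P.steps t ht).disjoint (P.disjoint t (by omega))

theorem pot_le_twice_sup_card {G : LGraph V} (hG : G.HasLHC) (P : BWPlay G.pred) :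
    ∀ t ≤ P.len, pot G (P.cfg t).1 (P.cfg t).2 ≤
      2 * ((Finset.range (t + 1)).sup fun s => ((P.cfg s).1 ∪ (P.cfg s).2).card)
  | 0, _ => by simp [P.init, pot_empty]
  | t + 1, ht => by
    refine hG.pot_le_of_move (P.disjoint t (by omega)) (P.steps t ht) ?_ ?_ ?_
    · exact (pot_le_twice_sup_card hG P t (by omega)).trans <| Nat.mul_le_mul_left 2 <|
        Finset.sup_mono (Finset.range_subset_range.2 (by omega))
    · exact Finset.le_sup (f := fun s => ((P.cfg s).1 ∪ (P.cfg s).2).card) (by simp)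
    · exact Finset.le_sup (f := fun s => ((P.cfg s).1 ∪ (P.cfg s).2).card) (by simp)

end BWPlay

/-- Let `G` be a layered DAG possessing the Limited
Hiding-Cardinality property, and let `P = (P_0 = (∅,∅), P_1, ..., P_τ)` be any
black-white pebbling on `G` starting from the empty configuration. Then for
every `t ∈ {1,...,τ}`, `pot(P_t) ≤ 2 · max_{s ≤ t} cost(P_s)`, where
`cost(B,W) = |B ∪ W|`. -/
theorem potential_le_twice_max_cost {V : Type} [DecidableEq V] (G : LGraph V)
    (hLHC : ∀ B W : Finset V, Disjoint B W →
      ∃ U : Finset V, HidesSet G.pred (↑(U ∪ W)) (↑B) ∧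
        pot G B W = klMeasure G U ∧ (U = B ∨ U.card < B.card + W.card))
    (P : BWPlay G.pred) :
    ∀ t : ℕ, 1 ≤ t → t ≤ P.len →
      pot G (P.cfg t).1 (P.cfg t).2 ≤
        2 * ((Finset.range (t + 1)).sup fun s => ((P.cfg s).1 ∪ (P.cfg s).2).card) :=
  fun t _ ht => P.pot_le_twice_sup_card hLHC t ht
end

section
/- Every pyramid graph Π_h is a spreading graph: for every hiding-connected tight vertex set X in Π_h and every level j with 1 ≤ j ≤ maxlevel(hidden(X)), the spreading inequality |X| ≥ h_j(hidden(X)) + j − minlevel(X) holds. -/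
/-- The pyramid graph of height `h` as a layered DAG. -/
def pyramid (h : ℕ) : LGraph (PyrV h) where
  pred := pyrPred h
  height := h
  lvl v := v.1.1
  lvl_le v := by have := v.2; show v.1.1 ≤ h; omega
  edge_lvl := by
    intro u v hu
    unfold pyrPred at hu
    split at hu
    · exact absurd hu (Finset.notMem_empty u)
    · rename_i hv
      rw [Finset.mem_insert, Finset.mem_singleton] at hu
      rcases hu with h1 | h1
      all_goals
        subst h1
        show v.1.1 = v.1.1 - 1 + 1
        omega
  source_lvl := by
    intro v
    show pyrPred h v = ∅ ↔ v.1.1 = 0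
    unfold pyrPred
    split
    · rename_i h0
      exact iff_of_true rfl h0
    · rename_i h0
      exact iff_of_false (by simp) h0
  sink := pyrSink h
  sink_unique := by
    intro v
    constructor
    · intro hv
      by_contra hne
      have hv2 := v.2
      rcases Nat.lt_or_ge (v.1.1 + v.1.2) h with hlt | hge
      · refine hv ⟨(v.1.1 + 1, v.1.2), by show v.1.1 + 1 + v.1.2 ≤ h; omega⟩ ?_
        unfold pyrPred
        split
        · rename_i h0
          exact absurd h0 (by simp)
        · refine Finset.mem_insert.mpr (Or.inl ?_)
          refine Subtype.ext (Prod.ext_iff.mpr ⟨?_, ?_⟩)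
          · show v.1.1 = v.1.1 + 1 - 1
            omega
          · rfl
      · have hz : v.1.2 ≠ 0 := by
          intro h0
          apply hne
          refine Subtype.ext (Prod.ext_iff.mpr ⟨?_, ?_⟩)
          · show v.1.1 = h
            omega
          · exact h0
        refine hv ⟨(v.1.1 + 1, v.1.2 - 1), by show v.1.1 + 1 + (v.1.2 - 1) ≤ h; omega⟩ ?_
        unfold pyrPred
        split
        · rename_i h0
          exact absurd h0 (by simp)
        · refine Finset.mem_insert.mpr (Or.inr (Finset.mem_singleton.mpr ?_))
          refine Subtype.ext (Prod.ext_iff.mpr ⟨?_, ?_⟩)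
          · show v.1.1 = v.1.1 + 1 - 1
            omega
          · show v.1.2 = v.1.2 - 1 + 1
            omega
    · intro hv w hw
      subst hv
      have hw2 := w.2
      unfold pyrPred at hw
      split at hw
      · exact absurd hw (Finset.notMem_empty _)
      · rename_i h0
        rw [Finset.mem_insert, Finset.mem_singleton] at hw
        rcases hw with h1 | h1
        all_goals
          have h2 := congrArg (fun x : PyrV h => x.1.1) h1
          simp only [pyrSink] at h2
          omega
  sink_lvl := rfl
/-- A vertex set `X` is tight if no `u ∈ X` is hidden by `X \ {u}`. -/
def Tight {V : Type} [DecidableEq V] (G : LGraph V) (X : Finset V) : Prop :=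
  ∀ u ∈ X, ¬ Hides G.pred (↑(X.erase u)) u

/-- The set of all vertices hidden by `X`. -/
def hiddenSet {V : Type} (G : LGraph V) (X : Finset V) : Set V :=
  { w | Hides G.pred (↑X) w }

/-- `X⌈x⌉`: the set of `u ∈ X` such that some source path to `x` intersects
`X` exactly in `{u}`. -/
def nhsSet {V : Type} [DecidableEq V] (G : LGraph V) (X : Finset V) (x : V) : Set V :=
  { u | u ∈ X ∧ ∃ l : List V, IsSourcePath G.pred l x ∧ u ∈ l ∧ ∀ y ∈ X, y ∈ l → y = u }

/-- The edge relation of the hiding set graph `H(G, X)`: vertices `x, y` (both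
hidden by `X`) are adjacent when the set of vertices below `x` hidden by
`X⌈x⌉` intersects the set of vertices below `y` hidden by `X⌈y⌉`. -/
def HSAdj {V : Type} [DecidableEq V] (G : LGraph V) (X : Finset V) (x y : V) : Prop :=
  x ∈ hiddenSet G X ∧ y ∈ hiddenSet G X ∧
    ∃ w, Reaches G.pred w x ∧ Hides G.pred (nhsSet G X x) w ∧
      Reaches G.pred w y ∧ Hides G.pred (nhsSet G X y) w

/-- `X` is hiding-connected if the hiding set graph `H(G, X)` is connected. -/
def HidingConnected {V : Type} [DecidableEq V] (G : LGraph V) (X : Finset V) : Prop :=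
  ∀ x ∈ hiddenSet G X, ∀ y ∈ hiddenSet G X, Relation.ReflTransGen (HSAdj G X) x y

/-- `h_j(Y)`: the minimum size of a vertex set with all vertices on level `j`
or higher hiding every vertex of `Y` on level `j` or higher. -/
noncomputable def hLevel {V : Type} (G : LGraph V) (j : ℕ) (Y : Set V) : ℕ :=
  sInf { n | ∃ Z : Finset V, (∀ z ∈ Z, j ≤ G.lvl z) ∧
      (∀ y ∈ Y, j ≤ G.lvl y → Hides G.pred (↑Z) y) ∧ Z.card = n }

/-- The lowest level of any vertex in `X`. -/
noncomputable def minLvl {V : Type} (G : LGraph V) (X : Finset V) : ℕ :=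
  sInf (G.lvl '' (↑X : Set V))

/-- The highest level of any vertex hidden by `X`. -/
noncomputable def maxLvlHidden {V : Type} (G : LGraph V) (X : Finset V) : ℕ :=
  sSup (G.lvl '' hiddenSet G X)

/-- A layered DAG is a spreading graph if for every (nonempty) hiding-connected
tight vertex set `X` and every level `j` with `1 ≤ j ≤ maxlevel(hidden(X))`,
the spreading inequality `|X| ≥ h_j(hidden(X)) + j − minlevel(X)` holds. -/
def Spreading {V : Type} [DecidableEq V] (G : LGraph V) : Prop :=
  ∀ X : Finset V, X.Nonempty → Tight G X → HidingConnected G X →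
    ∀ j : ℕ, 1 ≤ j → j ≤ maxLvlHidden G X →
      hLevel G j (hiddenSet G X) + j ≤ X.card + minLvl G X

/-!
Write `H_ℓ` for the set of vertices on level `ℓ` hidden by `X`, `X_{>ℓ}` for the vertices of `X`
above level `ℓ`, and `p = minlevel(X)`. For every `ℓ`, the cut `X_{>ℓ} ∪ H_ℓ` lies on levels `≥ ℓ`
and hides every hidden vertex on level `≥ ℓ`: walking down a source path from a hidden vertex, a
vertex outside `X` has only hidden predecessors. At `ℓ = p` the cut lies inside `X`.
Hiding-connectivity rules out a level between `p` and `maxlevel(hidden(X))` without hidden vertices,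
and in the pyramid the left-parent map injects `H_{ℓ+1} ∖ X` into `H_ℓ` minus its rightmost vertex
(whose right neighbour would be hidden too). So the cut loses at least one vertex per level on the
way from `p` to `j`, which is the spreading inequality.
-/

variable {V : Type}

namespace IsSourcePath

variable {pred : V → Finset V} {l : List V} {u w : V}

lemma last_mem (hl : IsSourcePath pred l w) : w ∈ l :=
  List.mem_of_getLast? hl.2.2

lemma append_singleton (hl : IsSourcePath pred l u) (hu : u ∈ pred w) :
    IsSourcePath pred (l ++ [w]) w := by
  obtain ⟨hc, ⟨s, hs, hsrc⟩, hlast⟩ := hl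
  refine ⟨List.isChain_append.2 ⟨hc, List.isChain_singleton w, ?_⟩, ⟨s, ?_, hsrc⟩, by simp⟩
  · simp_all
  · cases l <;> simp_all

lemma reaches_of_mem (hl : IsSourcePath pred l w) (hu : u ∈ l) : Reaches pred u w :=
  List.IsChain.backwards_induction (fun a => Reaches pred a w) l hl.1
    (fun _ _ hab hb => Relation.ReflTransGen.head hab hb)
    (fun hne => by
      have hlast := hl.2.2
      rw [List.getLast?_eq_some_getLast hne, Option.some.injEq] at hlast
      exact hlast ▸ .refl)
    u hu

lemma exists_eq_append_of_pred_ne_empty (hl : IsSourcePath pred l w) (hw : pred w ≠ ∅) :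
    ∃ l' u, l = l' ++ [w] ∧ u ∈ pred w ∧ IsSourcePath pred l' u := by
  obtain ⟨hc, ⟨s, hs, hsrc⟩, hlast⟩ := hl
  obtain ⟨l', a, rfl⟩ := (List.eq_nil_or_concat' l).resolve_left (by rintro rfl; simp at hs)
  obtain rfl : w = a := by simpa using hlast.symm
  obtain rfl | ⟨l'', u, rfl⟩ := List.eq_nil_or_concat' l'
  · simp only [List.nil_append, List.head?_cons, Option.some.injEq] at hs
    exact absurd (hs ▸ hsrc) hw
  · obtain ⟨hc', -, hlink⟩ := List.isChain_append.1 hc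
    refine ⟨l'' ++ [u], u, rfl, hlink u (by simp) w (by simp), hc', ⟨s, ?_, hsrc⟩, by simp⟩
    cases l'' <;> simp_all

end IsSourcePath

namespace LGraph

variable {G : LGraph V} {X : Finset V} {S : Set V} {l : List V} {u v w : V} {ℓ : ℕ}

lemma lvl_le_of_reaches (h : Reaches G.pred u w) : G.lvl u ≤ G.lvl w := by
  induction h with
  | refl => rfl
  | tail _ hbc ih => have := G.edge_lvl _ _ hbc; omega

lemma eq_or_lvl_lt_of_reaches (h : Reaches G.pred u w) : u = w ∨ G.lvl u < G.lvl w := by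
  rcases Relation.ReflTransGen.cases_tail h with rfl | ⟨b, hub, hbw⟩
  · exact Or.inl rfl
  · have := G.edge_lvl _ _ hbw
    have := lvl_le_of_reaches hub
    exact Or.inr (by omega)

lemma pred_ne_empty_of_lvl_ne_zero (hv : G.lvl v ≠ 0) : G.pred v ≠ ∅ :=
  fun h => hv ((G.source_lvl v).1 h)

variable (G) in
lemma exists_sourcePath (v : V) : ∃ l, IsSourcePath G.pred l v := by
  induction hn : G.lvl v generalizing v with
  | zero => exact ⟨[v], List.isChain_singleton v, ⟨v, rfl, (G.source_lvl v).2 hn⟩, rfl⟩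
  | succ n ih =>
    have hv : G.lvl v ≠ 0 := by omega
    obtain ⟨u, hu⟩ := Finset.nonempty_iff_ne_empty.2 (pred_ne_empty_of_lvl_ne_zero hv)
    obtain ⟨l, hl⟩ := ih u (by have := G.edge_lvl u v hu; omega)
    exact ⟨_, hl.append_singleton hu⟩

lemma exists_mem_lvl_le_of_hides (hw : Hides G.pred S w) : ∃ u ∈ S, G.lvl u ≤ G.lvl w := by
  obtain ⟨l, hl⟩ := G.exists_sourcePath w
  obtain ⟨u, hu, hul⟩ := hw l hl
  exact ⟨u, hu, lvl_le_of_reaches (hl.reaches_of_mem hul)⟩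

lemma mem_hiddenSet_of_mem (hx : v ∈ X) : v ∈ hiddenSet G X :=
  fun _ hl => ⟨v, hx, hl.last_mem⟩

lemma mem_hiddenSet_of_mem_pred (hv : v ∈ hiddenSet G X) (hvX : v ∉ X) (hu : u ∈ G.pred v) :
    u ∈ hiddenSet G X := by
  intro l hl
  obtain ⟨x, hxX, hxl⟩ := hv _ (hl.append_singleton hu)
  rcases List.mem_append.1 hxl with hxl | hxl
  · exact ⟨x, hxX, hxl⟩
  · obtain rfl := List.mem_singleton.1 hxl
    exact absurd hxX hvX

lemma mem_of_mem_hiddenSet_of_lvl_le {p : ℕ} (hX : ∀ x ∈ X, p ≤ G.lvl x)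
    (hv : v ∈ hiddenSet G X) (hvp : G.lvl v ≤ p) : v ∈ X := by
  obtain ⟨l, hl⟩ := G.exists_sourcePath v
  obtain ⟨u, huX, hul⟩ := hv l hl
  rcases eq_or_lvl_lt_of_reaches (hl.reaches_of_mem hul) with rfl | hlt
  · exact huX
  · exact absurd (hX u huX) (by omega)

lemma exists_mem_hidden_on_level_or_mem_above (hv : v ∈ hiddenSet G X)
    (hl : IsSourcePath G.pred l v) (hℓ : ℓ ≤ G.lvl v) :
    ∃ u ∈ l, (u ∈ hiddenSet G X ∧ G.lvl u = ℓ) ∨ (u ∈ X ∧ ℓ < G.lvl u) := by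
  induction hn : G.lvl v - ℓ generalizing v l with
  | zero => exact ⟨v, hl.last_mem, Or.inl ⟨hv, by omega⟩⟩
  | succ n ih =>
    by_cases hvX : v ∈ X
    · exact ⟨v, hl.last_mem, Or.inr ⟨hvX, by omega⟩⟩
    obtain ⟨l', u, rfl, hu, hl'⟩ :=
      hl.exists_eq_append_of_pred_ne_empty (pred_ne_empty_of_lvl_ne_zero (by omega))
    have := G.edge_lvl u v hu
    obtain ⟨x, hx, hx'⟩ :=
      ih (mem_hiddenSet_of_mem_pred hv hvX hu) hl' (by omega) (by omega)
    exact ⟨x, List.mem_append_left _ hx, hx'⟩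

lemma minLvl_le (hx : v ∈ X) : minLvl G X ≤ G.lvl v :=
  Nat.sInf_le ⟨v, hx, rfl⟩

variable (G) in
lemma exists_lvl_eq_minLvl (hX : X.Nonempty) : ∃ x ∈ X, G.lvl x = minLvl G X := by
  obtain ⟨x, hx⟩ := hX
  exact Nat.sInf_mem (s := G.lvl '' X) ⟨G.lvl x, x, hx, rfl⟩

variable (G) in
lemma exists_hidden_lvl_eq_maxLvlHidden (hX : X.Nonempty) :
    ∃ y ∈ hiddenSet G X, G.lvl y = maxLvlHidden G X := by
  obtain ⟨x, hx⟩ := hX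
  refine Nat.sSup_mem (s := G.lvl '' hiddenSet G X) ⟨G.lvl x, x, mem_hiddenSet_of_mem hx, rfl⟩
    ⟨G.height, ?_⟩
  rintro _ ⟨y, -, rfl⟩
  exact G.lvl_le y

end LGraph

open LGraph

/-- Some `x ∈ X⌈v⌉` lies no higher than `w`, hence no higher than `u`, and a source path to `v`
meets `X` only in `x`; descending along it from `v` therefore stops at a hidden vertex on level
`ℓ`. -/
lemma HSAdj.exists_hidden_lvl_eq [DecidableEq V] {G : LGraph V} {X : Finset V} {u v : V}
    {ℓ : ℕ} (huv : HSAdj G X u v) (hu : G.lvl u ≤ ℓ) (hv : ℓ ≤ G.lvl v) :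
    ∃ s ∈ hiddenSet G X, G.lvl s = ℓ := by
  obtain ⟨-, hvX, w, hwu, -, -, hwv⟩ := huv
  obtain ⟨x, ⟨-, l, hl, -, hlX⟩, hxw⟩ := exists_mem_lvl_le_of_hides hwv
  have hxu := lvl_le_of_reaches hwu
  obtain ⟨y, hyl, hy | ⟨hyX, hyℓ⟩⟩ := exists_mem_hidden_on_level_or_mem_above hvX hl hv
  · exact ⟨y, hy⟩
  · obtain rfl := hlX y hyX hyl
    omega

lemma HidingConnected.exists_hidden_lvl_eq [DecidableEq V] {G : LGraph V} {X : Finset V}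
    {x y : V} {ℓ : ℕ} (hC : HidingConnected G X) (hx : x ∈ hiddenSet G X)
    (hy : y ∈ hiddenSet G X) (hxℓ : G.lvl x ≤ ℓ) (hℓy : ℓ ≤ G.lvl y) :
    ∃ s ∈ hiddenSet G X, G.lvl s = ℓ := by
  induction hC x hx y hy using Relation.ReflTransGen.head_induction_on with
  | refl => exact ⟨y, hy, by omega⟩
  | @head a c hac _ ih =>
    rcases le_total (G.lvl c) ℓ with hc | hc
    · exact ih hac.2.1 hc
    · exact hac.exists_hidden_lvl_eq hxℓ hc

section Finite

variable [Fintype V] (G : LGraph V) (X : Finset V)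

open Classical in
noncomputable def hiddenAt (ℓ : ℕ) : Finset V :=
  Finset.univ.filter fun v => v ∈ hiddenSet G X ∧ G.lvl v = ℓ

variable {G X} in
@[simp]
lemma mem_hiddenAt {ℓ : ℕ} {v : V} : v ∈ hiddenAt G X ℓ ↔ v ∈ hiddenSet G X ∧ G.lvl v = ℓ := by
  simp [hiddenAt]

variable [DecidableEq V]

noncomputable def levelCut (ℓ : ℕ) : Finset V :=
  X.filter (fun x => ℓ < G.lvl x) ∪ hiddenAt G X ℓ

variable {G X}

lemma mem_levelCut {ℓ : ℕ} {v : V} :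
    v ∈ levelCut G X ℓ ↔ (v ∈ X ∧ ℓ < G.lvl v) ∨ (v ∈ hiddenSet G X ∧ G.lvl v = ℓ) := by
  simp [levelCut]

variable (G X) in
lemma hLevel_le_card_levelCut (ℓ : ℕ) : hLevel G ℓ (hiddenSet G X) ≤ (levelCut G X ℓ).card := by
  refine Nat.sInf_le ⟨levelCut G X ℓ, fun z hz => ?_, fun y hy hℓ l hl => ?_, rfl⟩
  · rcases mem_levelCut.1 hz with ⟨-, h⟩ | ⟨-, h⟩ <;> omega
  · obtain ⟨u, hul, hu⟩ := exists_mem_hidden_on_level_or_mem_above hy hl hℓ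
    exact ⟨u, mem_levelCut.2 hu.symm, hul⟩

lemma levelCut_subset {p ℓ : ℕ} (hX : ∀ x ∈ X, p ≤ G.lvl x) (hℓ : ℓ ≤ p) :
    levelCut G X ℓ ⊆ X := by
  intro v hv
  rcases mem_levelCut.1 hv with ⟨hvX, -⟩ | ⟨hvH, hvℓ⟩
  · exact hvX
  · exact mem_of_mem_hiddenSet_of_lvl_le hX hvH (by omega)

lemma card_levelCut_succ_lt {ℓ : ℕ}
    (h : (hiddenAt G X (ℓ + 1) \ X).card < (hiddenAt G X ℓ).card) :
    (levelCut G X (ℓ + 1)).card < (levelCut G X ℓ).card := by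
  have hsub : levelCut G X (ℓ + 1) ⊆
      X.filter (fun x => ℓ < G.lvl x) ∪ (hiddenAt G X (ℓ + 1) \ X) := by
    intro v hv
    simp only [Finset.mem_union, Finset.mem_filter, Finset.mem_sdiff, mem_hiddenAt]
    rcases mem_levelCut.1 hv with ⟨hvX, hvℓ⟩ | ⟨hvH, hvℓ⟩
    · exact Or.inl ⟨hvX, by omega⟩
    · by_cases hvX : v ∈ X
      · exact Or.inl ⟨hvX, by omega⟩
      · exact Or.inr ⟨⟨hvH, hvℓ⟩, hvX⟩
  have hdisj : Disjoint (X.filter (fun x => ℓ < G.lvl x)) (hiddenAt G X ℓ) :=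
    Finset.disjoint_left.2 fun v hv hv' => by
      have := (Finset.mem_filter.1 hv).2
      have := (mem_hiddenAt.1 hv').2
      omega
  calc (levelCut G X (ℓ + 1)).card
      ≤ (X.filter (fun x => ℓ < G.lvl x)).card + (hiddenAt G X (ℓ + 1) \ X).card :=
        (Finset.card_le_card hsub).trans (Finset.card_union_le _ _)
    _ < (X.filter (fun x => ℓ < G.lvl x)).card + (hiddenAt G X ℓ).card := by omega
    _ = (levelCut G X ℓ).card := (Finset.card_union_of_disjoint hdisj).symm

variable (G) in
theorem spreading_of_card_hiddenAt_sdiff_lt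
    (hG : ∀ (X : Finset V) (ℓ : ℕ), (hiddenAt G X ℓ).Nonempty →
      (hiddenAt G X (ℓ + 1) \ X).card < (hiddenAt G X ℓ).card) :
    Spreading G := by
  intro X hXne _ hC j _ hjM
  obtain ⟨x, hx, hxp⟩ := exists_lvl_eq_minLvl G hXne
  obtain ⟨y, hy, hyM⟩ := exists_hidden_lvl_eq_maxLvlHidden G hXne
  set p := minLvl G X
  have hXp : ∀ x ∈ X, p ≤ G.lvl x := fun x hx => minLvl_le hx
  have hdrop : ∀ k, p + k ≤ j → (levelCut G X (p + k)).card + k ≤ X.card := by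
    intro k
    induction k with
    | zero => exact fun _ => Finset.card_le_card (levelCut_subset hXp le_rfl)
    | succ k ih =>
      intro hk
      show (levelCut G X (p + k + 1)).card + (k + 1) ≤ X.card
      obtain ⟨s, hs, hsl⟩ := hC.exists_hidden_lvl_eq (ℓ := p + k)
        (mem_hiddenSet_of_mem hx) hy (by omega) (by omega)
      have := card_levelCut_succ_lt (hG X (p + k) ⟨s, mem_hiddenAt.2 ⟨hs, hsl⟩⟩)
      have := ih (by omega)
      omega
  have hcut : (levelCut G X j).card + (j - p) ≤ X.card := by
    rcases le_total j p with hjp | hpj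
    · simpa [Nat.sub_eq_zero_of_le hjp] using Finset.card_le_card (levelCut_subset hXp hjp)
    · simpa [Nat.add_sub_cancel' hpj] using hdrop (j - p) (by omega)
  have := hLevel_le_card_levelCut G X j
  omega

end Finite

namespace Pyramid

variable {h : ℕ}

@[simp]
lemma pyramid_lvl (v : PyrV h) : (pyramid h).lvl v = v.1.1 := rfl

instance : Fintype (PyrV h) :=
  Fintype.subtype ((Finset.range (h + 1) ×ˢ Finset.range (h + 1)).filter fun p => p.1 + p.2 ≤ h)
    (by simp only [Finset.mem_filter, Finset.mem_product, Finset.mem_range]; omega)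

def leftParent (v : PyrV h) : PyrV h :=
  ⟨(v.1.1 - 1, v.1.2), by have := v.2; simp only; omega⟩

lemma leftParent_mem_pyrPred {v : PyrV h} (hv : v.1.1 ≠ 0) : leftParent v ∈ pyrPred h v := by
  rw [pyrPred, dif_neg hv]
  exact Finset.mem_insert_self _ _

lemma exists_rightParent {v : PyrV h} (hv : v.1.1 ≠ 0) :
    ∃ u ∈ pyrPred h v, u.1.1 + 1 = v.1.1 ∧ u.1.2 = v.1.2 + 1 := by
  rw [pyrPred, dif_neg hv]
  exact ⟨_, Finset.mem_insert_of_mem (Finset.mem_singleton_self _), by simp only; omega, rfl⟩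

lemma card_hiddenAt_succ_sdiff_lt (X : Finset (PyrV h)) (ℓ : ℕ)
    (hne : (hiddenAt (pyramid h) X ℓ).Nonempty) :
    (hiddenAt (pyramid h) X (ℓ + 1) \ X).card < (hiddenAt (pyramid h) X ℓ).card := by
  obtain ⟨r, hr, hrmax⟩ := Finset.exists_max_image _ (fun v : PyrV h => v.1.2) hne
  have hmaps : ∀ v ∈ hiddenAt (pyramid h) X (ℓ + 1) \ X,
      leftParent v ∈ (hiddenAt (pyramid h) X ℓ).erase r := by
    intro v hv
    simp only [Finset.mem_sdiff, mem_hiddenAt, pyramid_lvl] at hv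
    obtain ⟨⟨hvH, hvℓ⟩, hvX⟩ := hv
    have hv0 : v.1.1 ≠ 0 := by omega
    obtain ⟨u, hu, hul, hui⟩ := exists_rightParent hv0
    have huH : u ∈ hiddenAt (pyramid h) X ℓ :=
      mem_hiddenAt.2 ⟨mem_hiddenSet_of_mem_pred hvH hvX hu, by simp only [pyramid_lvl]; omega⟩
    refine Finset.mem_erase.2 ⟨fun hr' => ?_, mem_hiddenAt.2
      ⟨mem_hiddenSet_of_mem_pred hvH hvX (leftParent_mem_pyrPred hv0), ?_⟩⟩
    · have := hrmax u huH
      rw [← hr'] at this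
      change u.1.2 ≤ v.1.2 at this
      omega
    · simp only [leftParent, pyramid_lvl]
      omega
  have hinj : Set.InjOn leftParent (↑(hiddenAt (pyramid h) X (ℓ + 1) \ X) : Set (PyrV h)) := by
    intro v hv w hw hvw
    simp only [Finset.coe_sdiff, Set.mem_sdiff, Finset.mem_coe, mem_hiddenAt] at hv hw
    simp only [leftParent, Subtype.mk.injEq, Prod.mk.injEq] at hvw
    exact Subtype.ext (Prod.ext (by simp only [pyramid_lvl] at hv hw; omega) hvw.2)
  calc (hiddenAt (pyramid h) X (ℓ + 1) \ X).card
      ≤ ((hiddenAt (pyramid h) X ℓ).erase r).card := Finset.card_le_card_of_injOn _ hmaps hinj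
    _ < (hiddenAt (pyramid h) X ℓ).card := Finset.card_erase_lt_of_mem hr

end Pyramid

theorem pyramid_is_spreading_general (h : ℕ) :
    Spreading (pyramid h) :=
  spreading_of_card_hiddenAt_sdiff_lt _ Pyramid.card_hiddenAt_succ_sdiff_lt

/-- Every pyramid graph `Π_h` is a spreading graph: for
every hiding-connected tight vertex set `X` in `Π_h` and every level `j` with
`1 ≤ j ≤ maxlevel(hidden(X))`, the spreading inequality
`|X| ≥ h_j(hidden(X)) + j − minlevel(X)` holds. -/
theorem pyramid_is_spreading (h : ℕ) (hh : 1 ≤ h) :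
    Spreading (pyramid h) :=
  pyramid_is_spreading_general h
end

section
/- Let U, V, Y be vertex sets in a layered DAG with U ≾_m V and Y ∩ V = ∅. Then m(Y ∪ U) ≤ m(Y ∪ V). -/
/-- `U ≾_m V`: for every `j ≥ 0` there is some `i ≤ j` with
`m_j(U) ≤ m_i(V)`. -/
def MLe {V : Type} (G : LGraph V) (U W : Finset V) : Prop :=
  ∀ j : ℕ, ∃ i ≤ j, mjMeasure G U j ≤ mjMeasure G W i

/-- Let `U, V', Y` be vertex sets in a layered DAG with
`U ≾_m V'` and `Y ∩ V' = ∅`.  Then `m(Y ∪ U) ≤ m(Y ∪ V')`. -/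
theorem measure_union_mono {V : Type} [DecidableEq V] (G : LGraph V)
    (U V' Y : Finset V) (hle : MLe G U V') (hd : Disjoint Y V') :
    klMeasure G (Y ∪ U) ≤ klMeasure G (Y ∪ V') := by
  apply Finset.sup_le
  intro j hj
  rw [Finset.mem_range] at hj
  by_cases hUne : (U.filter fun u => j ≤ G.lvl u).Nonempty
  · obtain ⟨i, hij, hm⟩ := hle j
    rw [mjMeasure, if_pos hUne, mjMeasure] at hm
    have hVne : (V'.filter fun u => i ≤ G.lvl u).Nonempty := by
      by_contra h
      rw [if_neg h] at hm
      have := Finset.card_pos.mpr hUne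
      omega
    rw [if_pos hVne] at hm
    have hi : i ∈ Finset.range (G.height + 1) := Finset.mem_range.mpr (by omega)
    refine le_trans ?_ (Finset.le_sup (f := mjMeasure G (Y ∪ V')) hi)
    have h1 : ((Y ∪ U).filter fun u => j ≤ G.lvl u).Nonempty := by
      obtain ⟨x, hx⟩ := hUne
      exact ⟨x, by simp only [Finset.mem_filter, Finset.mem_union] at hx ⊢; tauto⟩
    have h2 : ((Y ∪ V').filter fun u => i ≤ G.lvl u).Nonempty := by
      obtain ⟨x, hx⟩ := hVne
      exact ⟨x, by simp only [Finset.mem_filter, Finset.mem_union] at hx ⊢; tauto⟩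
    rw [mjMeasure, if_pos h1, mjMeasure, if_pos h2,
      Finset.filter_union, Finset.filter_union]
    have hc1 : ((Y.filter fun u => j ≤ G.lvl u) ∪
        (U.filter fun u => j ≤ G.lvl u)).card ≤
        (Y.filter fun u => j ≤ G.lvl u).card +
        (U.filter fun u => j ≤ G.lvl u).card := Finset.card_union_le _ _
    have hc2 : ((Y.filter fun u => i ≤ G.lvl u) ∪
        (V'.filter fun u => i ≤ G.lvl u)).card =
        (Y.filter fun u => i ≤ G.lvl u).card +
        (V'.filter fun u => i ≤ G.lvl u).card := by
      apply Finset.card_union_of_disjoint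
      exact (hd.mono (Finset.filter_subset _ _) (Finset.filter_subset _ _))
    have hc3 : (Y.filter fun u => j ≤ G.lvl u).card ≤
        (Y.filter fun u => i ≤ G.lvl u).card := by
      apply Finset.card_le_card
      intro x hx
      simp only [Finset.mem_filter] at hx ⊢
      exact ⟨hx.1, by omega⟩
    omega
  · have hi : j ∈ Finset.range (G.height + 1) := Finset.mem_range.mpr (by omega)
    refine le_trans ?_ (Finset.le_sup (f := mjMeasure G (Y ∪ V')) hi)
    rw [mjMeasure, mjMeasure]
    have heq : ((Y ∪ U).filter fun u => j ≤ G.lvl u) =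
        (Y.filter fun u => j ≤ G.lvl u) := by
      rw [Finset.filter_union, Finset.not_nonempty_iff_eq_empty.mp hUne,
        Finset.union_empty]
    rw [heq]
    split_ifs with h1 h2
    · have : (Y.filter fun u => j ≤ G.lvl u).card ≤
          ((Y ∪ V').filter fun u => j ≤ G.lvl u).card :=
        Finset.card_le_card (Finset.filter_subset_filter _
          (Finset.subset_union_left))
      omega
    · exact absurd (h1.mono (Finset.filter_subset_filter _
        Finset.subset_union_left)) h2
    · exact Nat.zero_le _
    · exact Nat.zero_le _
end

section
/- Let G be a blob-pebblable DAG and let C be a set of clauses each of which is derivable by resolution from (equivalently, implied by) the pebbling formula *Peb_G^d for some d ≥ 2. Then |C| ≥ cost(S(C)), where S(C) is the blob-pebbling configuration induced by C. -/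
/-- A chain: a set of vertices totally ordered by reachability. -/
def IsChainF {V : Type} (pred : V → Finset V) (B : Finset V) : Prop :=
  ∀ u ∈ B, ∀ v ∈ B, Reaches pred u v ∨ Reaches pred v u

/-- `b` is the bottom vertex of the chain `B`. -/
def ChainBot {V : Type} (pred : V → Finset V) (B : Finset V) (b : V) : Prop :=
  b ∈ B ∧ ∀ v ∈ B, Reaches pred b v

/-- `t` is the top vertex of the chain `B`. -/
def ChainTop {V : Type} (pred : V → Finset V) (B : Finset V) (t : V) : Prop :=
  t ∈ B ∧ ∀ v ∈ B, Reaches pred v t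

/-- The legal pebble positions with respect to a chain `B`: vertices not in
`B` lying on some path from a source through all of `B` to the top of `B`. -/
def LegalPos {V : Type} (pred : V → Finset V) (B : Finset V) : Set V :=
  { x | x ∉ B ∧ ∃ t l, ChainTop pred B t ∧ IsSourcePath pred l t ∧
      (∀ b ∈ B, b ∈ l) ∧ x ∈ l }

/-- A blob subconfiguration `[B]⟨W⟩`: a nonempty chain `B` (a black blob)
together with a set `W` of supporting white pebbles on legal positions. -/
structure SubConf {V : Type} (pred : V → Finset V) where
  B : Finset V
  W : Finset V
  hBne : B.Nonempty
  hchain : IsChainF pred B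
  hW : (↑W : Set V) ⊆ LegalPos pred B

/-- The cost of a set of blob subconfigurations: the number of chargeable
vertices, i.e. the bottom vertices of the black blobs together with the
supporting white pebbles below those bottom vertices. -/
noncomputable def blobCost {V : Type} (pred : V → Finset V) (S : Set (SubConf pred)) : ℕ :=
  Set.ncard { x : V | ∃ s ∈ S, ∃ b, ChainBot pred s.B b ∧
    (x = b ∨ (x ∈ s.W ∧ Reaches pred x b)) }

/-- A blob-pebblable DAG: a DAG with a unique sink, all vertices of indegree
0 or 2, and the sibling non-reachability property (the two immediate
predecessors of any vertex are not reachable from one another). -/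
structure BlobDag (V : Type) where
  pred : V → Finset V
  wf : WellFounded fun u v => u ∈ pred v
  indeg : ∀ v, (pred v).card = 0 ∨ (pred v).card = 2
  sink : V
  sink_unique : ∀ v, (∀ w, v ∉ pred w) ↔ v = sink
  sibling : ∀ w : V, ∀ u ∈ pred w, ∀ x ∈ pred w, u ≠ x → ¬ Reaches pred u x

/-- The pebbling formula `*Peb^d` (without target axioms) over the DAG given
by the predecessor function `pred`. -/
def pebStarCnfP {V : Type} [DecidableEq V] (pred : V → Finset V) (d : ℕ) :
    Set (RClause (V × Fin d)) :=
  { C |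
    (∃ s : V, pred s = ∅ ∧ C = posCl d s) ∨
    (∃ w u v : V, pred w = {u, v} ∧ u ≠ v ∧ ∃ i j : Fin d,
      C = insert ((u, i), false) (insert ((v, j), false) (posCl d w))) }

/-- `All⁺(S)`: the set of clauses `x(s)₁ ∨ ... ∨ x(s)_d` for `s ∈ S`. -/
def allPos {V : Type} [DecidableEq V] (d : ℕ) (S : Finset V) :
    Set (RClause (V × Fin d)) :=
  posCl d '' (↑S : Set V)

/-- `Some⁺(B)`: the clause `⋁_{b ∈ B} (x(b)₁ ∨ ... ∨ x(b)_d)`. -/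
def somePos {V : Type} [DecidableEq V] (d : ℕ) (B : Finset V) :
    RClause (V × Fin d) :=
  B.biUnion fun b => posCl d b

/-- A clause set `C` induces the blob subconfiguration `s = [B]⟨W⟩` if there
are `C_B ⊆ C` and `S ⊆ V(G) ∖ B` with `W = S ∩ legal(B)` such that
`C_B ∪ All⁺(S)` implies `Some⁺(B)` precisely, i.e. the implication fails for
every proper subset of `C_B`, of `S`, and of `B`. -/
def Induces {V : Type} [DecidableEq V] (pred : V → Finset V) (d : ℕ)
    (C : Finset (RClause (V × Fin d))) (s : SubConf pred) : Prop :=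
  ∃ CB : Finset (RClause (V × Fin d)), CB ⊆ C ∧
    ∃ S : Finset V, Disjoint S s.B ∧
      (↑s.W : Set V) = (↑S : Set V) ∩ LegalPos pred s.B ∧
      CnfImplies ((↑CB : Set (RClause (V × Fin d))) ∪ allPos d S) (somePos d s.B) ∧
      (∀ CB' : Finset (RClause (V × Fin d)), CB' ⊂ CB →
        ¬ CnfImplies ((↑CB' : Set (RClause (V × Fin d))) ∪ allPos d S) (somePos d s.B)) ∧
      (∀ S' : Finset V, S' ⊂ S →
        ¬ CnfImplies ((↑CB : Set (RClause (V × Fin d))) ∪ allPos d S') (somePos d s.B)) ∧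
      (∀ B' : Finset V, B' ⊂ s.B →
        ¬ CnfImplies ((↑CB : Set (RClause (V × Fin d))) ∪ allPos d S) (somePos d B'))

/-! ### Auxiliary material for Statement 17 -/

section Blob17Aux

variable {V : Type}

private lemma blob17_acc_nrefl {r : V → V → Prop} {a : V} (h : Acc r a) : ¬ r a a := by
  induction h with
  | intro x _ ih => exact fun hxx => ih x hxx hxx

private lemma blob17_reaches_antisymm {pred : V → Finset V}
    (hwf : WellFounded fun u v : V => u ∈ pred v)
    {a b : V} (hab : Reaches pred a b) (hba : Reaches pred b a) : a = b := by
  by_contra hne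
  rcases Relation.reflTransGen_iff_eq_or_transGen.mp hab with h | h
  · exact hne h.symm
  · have : Relation.TransGen (fun u v : V => u ∈ pred v) a a :=
      Relation.TransGen.trans_left h hba
    exact blob17_acc_nrefl ((hwf.transGen).apply a) this

private lemma blob17_exists_maximal [DecidableEq V] {pred : V → Finset V}
    (hwf : WellFounded fun u v : V => u ∈ pred v)
    (X : Finset V) (hX : X.Nonempty) :
    ∃ x0 ∈ X, ∀ y ∈ X, Reaches pred x0 y → y = x0 := by
  classical
  induction X using Finset.induction_on with
  | empty => exact absurd hX (by simp)
  | @insert a s ha ih =>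
    rcases s.eq_empty_or_nonempty with rfl | hs
    · exact ⟨a, by simp, by simp⟩
    · obtain ⟨m, hm, hmax⟩ := ih hs
      by_cases hr : Reaches pred m a
      · refine ⟨a, Finset.mem_insert_self a s, ?_⟩
        intro y hy hay
        rcases Finset.mem_insert.mp hy with rfl | hy
        · rfl
        · have hym := hmax y hy (hr.trans hay)
          subst hym
          exact absurd (blob17_reaches_antisymm hwf hay hr) fun h => ha (h ▸ hm)
      · refine ⟨m, Finset.mem_insert_of_mem hm, ?_⟩
        intro y hy hmy
        rcases Finset.mem_insert.mp hy with rfl | hy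
        · exact absurd hmy hr
        · exact hmax y hy hmy

variable [DecidableEq V]

/-- The clauses of `C` containing some literal over the vertex `x`. -/
private def mentionSet (d : ℕ) (C : Finset (RClause (V × Fin d))) (x : V) :
    Finset (RClause (V × Fin d)) :=
  C.filter fun D => ∃ l ∈ D, l.1.1 = x

private lemma mem_mentionSet {d : ℕ} {C : Finset (RClause (V × Fin d))} {x : V}
    {D : RClause (V × Fin d)} :
    D ∈ mentionSet d C x ↔ D ∈ C ∧ ∃ l ∈ D, l.1.1 = x :=
  Finset.mem_filter

private lemma blob17_mem_posCl {d : ℕ} {v : V} {l : (V × Fin d) × Bool} :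
    l ∈ posCl d v ↔ ∃ j, l = ((v, j), true) := by
  simp [posCl, eq_comm]

private lemma blob17_sat_of_agree {d : ℕ} {α β : V × Fin d → Bool}
    {D : RClause (V × Fin d)} (h : ∀ l ∈ D, α l.1 = β l.1)
    (hD : RClause.sat β D) : RClause.sat α D := by
  obtain ⟨l, hl, hval⟩ := hD
  exact ⟨l, hl, (h l hl).trans hval⟩

/-- A vertex is charged by the configuration induced by `C`. -/
private def ChargedV (pred : V → Finset V) (d : ℕ) (C : Finset (RClause (V × Fin d)))
    (x : V) : Prop :=
  ∃ s : SubConf pred, Induces pred d C s ∧ ∃ b, ChainBot pred s.B b ∧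
    (x = b ∨ (x ∈ s.W ∧ Reaches pred x b))

private lemma blob17_hall (pred : V → Finset V)
    (hwf : WellFounded fun u v : V => u ∈ pred v) (d : ℕ) (hd : 2 ≤ d)
    (C : Finset (RClause (V × Fin d))) :
    ∀ (n : ℕ) (X : Finset V), X.card ≤ n → (∀ x ∈ X, ChargedV pred d C x) →
      X.card ≤ (X.biUnion (mentionSet d C)).card := by
  classical
  intro n
  induction n with
  | zero => intro X hX _; omega
  | succ n IH =>
    intro X hXn hXc
    by_contra hcon
    push_neg at hcon
    have hne : X.Nonempty := Finset.card_pos.mp (by omega)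
    obtain ⟨x0, hx0X, hx0max⟩ := blob17_exists_maximal hwf X hne
    set Y := X.erase x0 with hYdef
    have hYX : Y ⊆ X := Finset.erase_subset _ _
    have hYcard : Y.card = X.card - 1 := Finset.card_erase_of_mem hx0X
    -- Hall's condition for the rest of the charged vertices
    have hallY : ∀ s : Finset {y // y ∈ Y},
        s.card ≤ (s.biUnion fun y => mentionSet d C y.1).card := by
      intro s
      set X' := s.image Subtype.val with hX'
      have hcard : X'.card = s.card :=
        Finset.card_image_of_injective _ Subtype.val_injective
      have hsub : X' ⊆ Y := by
        intro v hv
        obtain ⟨y, _, rfl⟩ := Finset.mem_image.mp hv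
        exact y.2
      have hbeq : X'.biUnion (mentionSet d C) = s.biUnion fun y => mentionSet d C y.1 := by
        ext D
        simp only [Finset.mem_biUnion, Finset.mem_image, hX']
        constructor
        · rintro ⟨v, ⟨y, hy, rfl⟩, hD⟩; exact ⟨y, hy, hD⟩
        · rintro ⟨y, hy, hD⟩; exact ⟨y.1, ⟨y, hy, rfl⟩, hD⟩
      have hle : X'.card ≤ n := by
        have := Finset.card_le_card hsub
        omega
      have := IH X' hle fun x hx => hXc x (hYX (hsub hx))
      rw [hcard, hbeq] at this
      exact this
    obtain ⟨σ, hσinj, hσmem⟩ :=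
      (Finset.all_card_le_biUnion_card_iff_exists_injective
        (fun y : {y // y ∈ Y} => mentionSet d C y.1)).mp hallY
    -- the image of σ is exactly the set of clauses mentioning X
    have himg_sub : Finset.univ.image σ ⊆ X.biUnion (mentionSet d C) := by
      intro D hD
      obtain ⟨y, _, rfl⟩ := Finset.mem_image.mp hD
      exact Finset.mem_biUnion.mpr ⟨y.1, hYX y.2, hσmem y⟩
    have himgcard : (Finset.univ.image σ).card = Y.card := by
      rw [Finset.card_image_of_injective _ hσinj, Finset.card_univ, Fintype.card_coe]
    have hcover : X.biUnion (mentionSet d C) = Finset.univ.image σ := by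
      refine (Finset.eq_of_subset_of_card_le himg_sub ?_).symm
      rw [himgcard, hYcard]
      omega
    -- unpack the witness for x0
    obtain ⟨s, hsInd, b, hbBot, hrole⟩ := hXc x0 hx0X
    obtain ⟨CB, hCBsub, S, hdisj, hWeq, himp, _hCBmin, hSmin, hBmin⟩ := hsInd
    have hx0reach : Reaches pred x0 b := by
      rcases hrole with rfl | hw
      · exact Relation.ReflTransGen.refl
      · exact hw.2
    -- the common contradiction machine
    have key : ∀ (β : V × Fin d → Bool) (c0 : Bool),
        (∀ D ∈ CB, RClause.sat β D) →
        (∀ w ∈ S, w ≠ x0 → RClause.sat β (posCl d w)) →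
        (∀ v ∈ s.B, v ≠ x0 → ∀ j, β (v, j) = false) →
        (x0 ∈ s.B → c0 = false) →
        (x0 ∈ S → c0 = true) → False := by
      intro β c0 hβCB hβS hβB hc0B hc0S
      have hlit : ∀ y : {y // y ∈ Y}, ∃ l, l ∈ σ y ∧ l.1.1 = y.1 := by
        intro y
        obtain ⟨-, l, hl, hlx⟩ := mem_mentionSet.mp (hσmem y)
        exact ⟨l, hl, hlx⟩
      choose lit hlit1 hlit2 using hlit
      set α' : V × Fin d → Bool := fun p =>
        if p.1 = x0 then c0
        else if hy : p.1 ∈ Y then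
          (if (lit ⟨p.1, hy⟩).2 then true else decide (p.2 ≠ (lit ⟨p.1, hy⟩).1.2))
        else β p with hα'
      have hoff : ∀ p : V × Fin d, p.1 ∉ X → α' p = β p := by
        intro p hp
        have h1 : ¬ p.1 = x0 := fun h => hp (h ▸ hx0X)
        have h2 : p.1 ∉ Y := fun h => hp (hYX h)
        simp [hα', h1, h2]
      have hx0val : ∀ j : Fin d, α' (x0, j) = c0 := by
        intro j; simp [hα']
      have hynon : ∀ y ∈ Y, ∃ j, α' (y, j) = true := by
        intro y hy
        have hne : ¬ y = x0 := (Finset.mem_erase.mp hy).1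
        by_cases hpol : (lit ⟨y, hy⟩).2
        · exact ⟨(lit ⟨y, hy⟩).1.2, by simp [hα', hne, hy, hpol]⟩
        · set i0 := (lit ⟨y, hy⟩).1.2 with hi0
          have h2d : ∃ j : Fin d, ¬ j = i0 := by
            have : Nontrivial (Fin d) := Fin.nontrivial_iff_two_le.mpr hd
            obtain ⟨j, hj⟩ := exists_ne i0
            exact ⟨j, hj⟩
          obtain ⟨j, hj⟩ := h2d
          refine ⟨j, ?_⟩
          simp [hα', hne, hy, hpol, ← hi0, hj]
      have hmatched : ∀ y : {y // y ∈ Y}, RClause.sat α' (σ y) := by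
        intro y
        refine ⟨lit y, hlit1 y, ?_⟩
        have hyY : (lit y).1.1 ∈ Y := (hlit2 y).symm ▸ y.2
        have hyne : ¬ (lit y).1.1 = x0 := by
          rw [hlit2 y]; exact (Finset.mem_erase.mp y.2).1
        have hsub : (⟨(lit y).1.1, hyY⟩ : {y // y ∈ Y}) = y := Subtype.ext (hlit2 y)
        show α' (lit y).1 = (lit y).2
        rw [hα']
        simp only [if_neg hyne, dif_pos hyY, hsub]
        cases h : (lit y).2 <;> simp [h]
      have hBY : ∀ v ∈ s.B, v ∉ Y := by
        intro v hv hvY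
        have hvX : v ∈ X := hYX hvY
        have hr : Reaches pred x0 v :=
          Relation.ReflTransGen.trans hx0reach (hbBot.2 v hv)
        exact (Finset.mem_erase.mp hvY).1 (hx0max v hvX hr)
      have hhyps : ∀ F ∈ (↑CB : Set (RClause (V × Fin d))) ∪ allPos d S,
          RClause.sat α' F := by
        rintro F (hF | hF)
        · have hFC : F ∈ CB := hF
          by_cases hFb : F ∈ X.biUnion (mentionSet d C)
          · rw [hcover] at hFb
            obtain ⟨y, -, rfl⟩ := Finset.mem_image.mp hFb
            exact hmatched y
          · refine blob17_sat_of_agree ?_ (hβCB F hFC)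
            intro l hl
            refine hoff l.1 fun hmem => hFb ?_
            exact Finset.mem_biUnion.mpr
              ⟨l.1.1, hmem, mem_mentionSet.mpr ⟨hCBsub hFC, l, hl, rfl⟩⟩
        · obtain ⟨w, hwS, rfl⟩ := hF
          have hwS' : w ∈ S := hwS
          by_cases hwx : w = x0
          · subst hwx
            refine ⟨((w, ⟨0, by omega⟩), true), blob17_mem_posCl.mpr ⟨_, rfl⟩, ?_⟩
            rw [hx0val]
            exact hc0S hwS'
          · by_cases hwY : w ∈ Y
            · obtain ⟨j, hj⟩ := hynon w hwY
              exact ⟨((w, j), true), blob17_mem_posCl.mpr ⟨_, rfl⟩, hj⟩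
            · have hwX : w ∉ X := fun h => hwY (Finset.mem_erase.mpr ⟨hwx, h⟩)
              refine blob17_sat_of_agree ?_ (hβS w hwS' hwx)
              intro l hl
              obtain ⟨j, rfl⟩ := blob17_mem_posCl.mp hl
              exact hoff _ hwX
      have hsome := himp α' hhyps
      obtain ⟨l, hl, hval⟩ := hsome
      obtain ⟨v, hvB, hlv⟩ := Finset.mem_biUnion.mp hl
      obtain ⟨j, rfl⟩ := blob17_mem_posCl.mp hlv
      by_cases hvx : v = x0
      · subst hvx
        rw [hx0val, hc0B hvB] at hval
        exact Bool.false_ne_true hval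
      · have hvY : v ∉ Y := hBY v hvB
        have hvX : v ∉ X := fun h => hvY (Finset.mem_erase.mpr ⟨hvx, h⟩)
        rw [hoff _ hvX, hβB v hvB hvx j] at hval
        exact Bool.false_ne_true hval
    -- now split on the role of x0
    rcases hrole with rfl | hwhite
    · -- x0 is the bottom of the blob
      have hx0B : x0 ∈ s.B := hbBot.1
      have hss : s.B.erase x0 ⊂ s.B := Finset.erase_ssubset hx0B
      have hmin := hBmin (s.B.erase x0) hss
      unfold CnfImplies at hmin
      push_neg at hmin
      obtain ⟨γ, hγ1, hγ2⟩ := hmin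
      refine key γ false ?_ ?_ ?_ (fun _ => rfl) ?_
      · exact fun D hD => hγ1 D (Set.mem_union_left _ hD)
      · exact fun w hw _ => hγ1 (posCl d w) (Set.mem_union_right _ ⟨w, hw, rfl⟩)
      · intro v hv hvx j
        by_contra hTrue
        exact hγ2 ⟨((v, j), true), Finset.mem_biUnion.mpr
          ⟨v, Finset.mem_erase.mpr ⟨hvx, hv⟩, blob17_mem_posCl.mpr ⟨_, rfl⟩⟩,
          by simpa using hTrue⟩
      · intro hx0S
        exact absurd hx0B (Finset.disjoint_left.mp hdisj hx0S)
    · -- x0 is a charged white pebble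
      obtain ⟨hxW, _⟩ := hwhite
      have hxWset : (x0 : V) ∈ (↑s.W : Set V) := hxW
      rw [hWeq] at hxWset
      obtain ⟨hx0S, hx0Leg⟩ := hxWset
      have hx0S' : x0 ∈ S := hx0S
      have hx0nB : x0 ∉ s.B := hx0Leg.1
      have hss : S.erase x0 ⊂ S := Finset.erase_ssubset hx0S'
      have hmin := hSmin (S.erase x0) hss
      unfold CnfImplies at hmin
      push_neg at hmin
      obtain ⟨γ, hγ1, hγ2⟩ := hmin
      refine key γ true ?_ ?_ ?_ ?_ (fun _ => rfl)
      · exact fun D hD => hγ1 D (Set.mem_union_left _ hD)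
      · intro w hw hwx
        exact hγ1 (posCl d w)
          (Set.mem_union_right _ ⟨w, by simp [hwx, hw], rfl⟩)
      · intro v hv _ j
        by_contra hTrue
        exact hγ2 ⟨((v, j), true), Finset.mem_biUnion.mpr
          ⟨v, hv, blob17_mem_posCl.mpr ⟨_, rfl⟩⟩, by simpa using hTrue⟩
      · exact fun h => absurd h hx0nB

end Blob17Aux


/-- Let `G` be a blob-pebblable DAG and let `C` be a set of
clauses each of which is implied by (equivalently, derivable by resolution
from) the pebbling formula `*Peb_G^d` for some `d ≥ 2`.  Then
`|C| ≥ cost(S(C))`, where `S(C)` is the blob-pebbling configuration induced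
by `C`. -/
theorem blob_cost_le_clause_count {V : Type} [DecidableEq V] [Fintype V]
    (G : BlobDag V) (d : ℕ) (hd : 2 ≤ d)
    (C : Finset (RClause (V × Fin d)))
    (hC : ∀ D ∈ C, CnfImplies (pebStarCnfP G.pred d) D) :
    blobCost G.pred { s : SubConf G.pred | Induces G.pred d C s } ≤ C.card := by

  classical
  have hset : { x : V | ∃ s ∈ { s : SubConf G.pred | Induces G.pred d C s }, ∃ b,
      ChainBot G.pred s.B b ∧ (x = b ∨ (x ∈ s.W ∧ Reaches G.pred x b)) } =
      ↑(Finset.univ.filter (ChargedV G.pred d C)) := by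
    ext x
    simp only [Finset.coe_filter, Set.mem_setOf_eq, Finset.mem_univ, true_and, ChargedV]
  have hcost : blobCost G.pred { s : SubConf G.pred | Induces G.pred d C s } =
      (Finset.univ.filter (ChargedV G.pred d C)).card := by
    unfold blobCost
    rw [hset, Set.ncard_coe_finset]
  rw [hcost]
  set T := Finset.univ.filter (ChargedV G.pred d C) with hT
  have hTc : ∀ x ∈ T, ChargedV G.pred d C x := fun x hx => (Finset.mem_filter.mp hx).2
  have h1 := blob17_hall G.pred G.wf d hd C T.card T le_rfl hTc
  have h2 : T.biUnion (mentionSet d C) ⊆ C := by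
    intro D hD
    obtain ⟨x, _, hD⟩ := Finset.mem_biUnion.mp hD
    exact (mem_mentionSet.mp hD).1
  exact h1.trans (Finset.card_le_card h2)
end
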